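/- arXiv:1711.06466 — 9 statements merged into one kernel-verified Lean document; each statement's English description precedes it below -/
import Mathlib

section
/- Weak duality: let μ and ν be probability measures on ℝ with finite first moments, let K₂ < K₁ be reals, let π be a martingale coupling of μ and ν and B ⊆ ℝ a Borel set. Let φ, ψ : ℝ → ℝ be Borel functions with φ integrable with respect to μ and ψ integrable with respect to ν, and let θ₁, θ₂ : ℝ → ℝ be bounded Borel functions such that for all x, y ∈ ℝ: max(K₁ − x, 0) ≤ φ(x) + ψ(y) + θ₁(x)(y − x) and max(K₂ − y, 0) ≤ φ(x) + ψ(y) + θ₂(x)(y − x). Then the American-put payoff satisfies A(π,B) ≤ ∫ φ dμ + ∫ ψ dν. -/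
open MeasureTheory Set

/-- The put price function `P_η(k) = ∫ (k-x)⁺ dη(x)`. -/
noncomputable def putPrice (η : Measure ℝ) (k : ℝ) : ℝ := ∫ x, max (k - x) 0 ∂η

/-- `π` is a martingale coupling of `μ` and `ν`. -/
def IsMartingaleCoupling (μ ν : Measure ℝ) (π : Measure (ℝ × ℝ)) : Prop :=
  IsProbabilityMeasure π ∧ π.map Prod.fst = μ ∧ π.map Prod.snd = ν ∧
    ∀ B : Set ℝ, MeasurableSet B →
      ∫ p in B ×ˢ (Set.univ : Set ℝ), p.2 ∂π = ∫ x in B, x ∂μ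

/-- The American-put payoff under coupling `π` and exercise set `B`. -/
noncomputable def amPayoff (K₁ K₂ : ℝ) (π : Measure (ℝ × ℝ)) (B : Set ℝ) : ℝ :=
  ∫ p, (B.indicator (fun x => max (K₁ - x) 0) p.1
      + Bᶜ.indicator (fun _ => max (K₂ - p.2) 0) p.1) ∂π

/-!
On `B × ℝ` the payoff is bounded by the first superhedging inequality and on
`Bᶜ × ℝ` by the second, so with `θ := B.piecewise θ₁ θ₂` the payoff integrand is dominated by
`φ x + ψ y + θ x * (y - x)`. Integrating against `π`, the marginals turn the first two terms into
`∫ φ dμ + ∫ ψ dν`, and the trading term vanishes: the martingale condition says exactly that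
`E[Y - X | X] = 0`, and `θ X` is bounded and `X`-measurable, so it can be pulled out of the
conditional expectation.
-/

namespace IsMartingaleCoupling

variable {μ ν : Measure ℝ} {π : Measure (ℝ × ℝ)}

theorem integrable_comp_fst (hπ : IsMartingaleCoupling μ ν π) {f : ℝ → ℝ}
    (hf : Integrable f μ) : Integrable (fun p => f p.1) π :=
  (hπ.2.1 ▸ hf).comp_measurable measurable_fst

theorem integrable_comp_snd (hπ : IsMartingaleCoupling μ ν π) {f : ℝ → ℝ}
    (hf : Integrable f ν) : Integrable (fun p => f p.2) π :=
  (hπ.2.2.1 ▸ hf).comp_measurable measurable_snd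

theorem integral_comp_fst (hπ : IsMartingaleCoupling μ ν π) {f : ℝ → ℝ}
    (hf : AEStronglyMeasurable f μ) : ∫ p, f p.1 ∂π = ∫ x, f x ∂μ := by
  rw [← hπ.2.1] at hf ⊢
  exact (integral_map measurable_fst.aemeasurable hf).symm

theorem integral_comp_snd (hπ : IsMartingaleCoupling μ ν π) {f : ℝ → ℝ}
    (hf : AEStronglyMeasurable f ν) : ∫ p, f p.2 ∂π = ∫ y, f y ∂ν := by
  rw [← hπ.2.2.1] at hf ⊢
  exact (integral_map measurable_snd.aemeasurable hf).symm

theorem integrable_increment (hπ : IsMartingaleCoupling μ ν π)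
    (hμ : Integrable (fun x => x) μ) (hν : Integrable (fun y => y) ν) :
    Integrable (fun p : ℝ × ℝ => p.2 - p.1) π :=
  (hπ.integrable_comp_snd hν).sub (hπ.integrable_comp_fst hμ)

theorem setIntegral_increment_eq_zero (hπ : IsMartingaleCoupling μ ν π)
    (hμ : Integrable (fun x => x) μ) (hν : Integrable (fun y => y) ν)
    {B : Set ℝ} (hB : MeasurableSet B) :
    ∫ p in Prod.fst ⁻¹' B, (p.2 - p.1) ∂π = 0 := by
  have hpre : Prod.fst ⁻¹' B = B ×ˢ (univ : Set ℝ) := prod_univ.symm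
  have hfst : ∫ p in Prod.fst ⁻¹' B, p.1 ∂π = ∫ x in B, x ∂μ := by
    rw [← hπ.2.1] at hμ ⊢
    exact (setIntegral_map hB hμ.aestronglyMeasurable measurable_fst.aemeasurable).symm
  have hsnd : ∫ p in Prod.fst ⁻¹' B, p.2 ∂π = ∫ x in B, x ∂μ := hpre ▸ hπ.2.2.2 B hB
  rw [integral_sub (hπ.integrable_comp_snd hν).integrableOn
    (hπ.integrable_comp_fst hμ).integrableOn, hfst, hsnd, sub_self]

theorem condExp_increment_ae_eq_zero (hπ : IsMartingaleCoupling μ ν π)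
    (hμ : Integrable (fun x => x) μ) (hν : Integrable (fun y => y) ν) :
    π[fun p => p.2 - p.1 | MeasurableSpace.comap Prod.fst Real.measurableSpace] =ᵐ[π] 0 := by
  have := hπ.1
  have hm : MeasurableSpace.comap (Prod.fst : ℝ × ℝ → ℝ) Real.measurableSpace ≤
      Prod.instMeasurableSpace :=
    measurable_fst.comap_le
  refine (ae_eq_condExp_of_forall_setIntegral_eq hm (hπ.integrable_increment hμ hν)
    (fun _ _ _ => integrableOn_zero) (fun s hs _ => ?_) aestronglyMeasurable_zero).symm
  obtain ⟨B, hB, rfl⟩ := hs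
  rw [hπ.setIntegral_increment_eq_zero hμ hν hB, integral_zero]

theorem integrable_mul_increment (hπ : IsMartingaleCoupling μ ν π)
    (hμ : Integrable (fun x => x) μ) (hν : Integrable (fun y => y) ν)
    {θ : ℝ → ℝ} (hθm : Measurable θ) (hθb : ∃ C, ∀ x, |θ x| ≤ C) :
    Integrable (fun p : ℝ × ℝ => θ p.1 * (p.2 - p.1)) π := by
  obtain ⟨C, hC⟩ := hθb
  exact (hπ.integrable_increment hμ hν).bdd_mul (hθm.comp measurable_fst).aestronglyMeasurable
    (Filter.Eventually.of_forall fun p => (Real.norm_eq_abs _).trans_le (hC p.1))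

theorem integral_mul_increment_eq_zero (hπ : IsMartingaleCoupling μ ν π)
    (hμ : Integrable (fun x => x) μ) (hν : Integrable (fun y => y) ν)
    {θ : ℝ → ℝ} (hθm : Measurable θ) (hθb : ∃ C, ∀ x, |θ x| ≤ C) :
    ∫ p, θ p.1 * (p.2 - p.1) ∂π = 0 := by
  have := hπ.1
  set m : MeasurableSpace (ℝ × ℝ) := MeasurableSpace.comap Prod.fst Real.measurableSpace
  have hm : m ≤ Prod.instMeasurableSpace := measurable_fst.comap_le
  have hθ : StronglyMeasurable[m] (fun p : ℝ × ℝ => θ p.1) :=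
    (hθm.comp (Measurable.of_comap_le le_rfl)).stronglyMeasurable
  have hθint := hπ.integrable_mul_increment hμ hν hθm hθb
  calc ∫ p, θ p.1 * (p.2 - p.1) ∂π
      = ∫ p, (π[(fun p : ℝ × ℝ => θ p.1) * (fun p => p.2 - p.1) | m]) p ∂π :=
        (integral_condExp hm).symm
    _ = ∫ p, ((fun p : ℝ × ℝ => θ p.1) * 0) p ∂π := by
        refine integral_congr_ae ?_
        filter_upwards [condExp_mul_of_stronglyMeasurable_left hθ hθint
          (hπ.integrable_increment hμ hν), hπ.condExp_increment_ae_eq_zero hμ hν] with p hp h0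
        rw [hp, Pi.mul_apply, Pi.mul_apply, h0]
    _ = 0 := by simp

end IsMartingaleCoupling

theorem exists_abs_piecewise_le {θ₁ θ₂ : ℝ → ℝ} (B : Set ℝ) [DecidablePred (· ∈ B)]
    (hθ₁b : ∃ C, ∀ x, |θ₁ x| ≤ C) (hθ₂b : ∃ C, ∀ x, |θ₂ x| ≤ C) :
    ∃ C, ∀ x, |B.piecewise θ₁ θ₂ x| ≤ C := by
  obtain ⟨C₁, hC₁⟩ := hθ₁b
  obtain ⟨C₂, hC₂⟩ := hθ₂b
  refine ⟨max C₁ C₂, fun x => ?_⟩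
  by_cases hx : x ∈ B
  · simpa [hx] using le_max_of_le_left (hC₁ x)
  · simpa [hx] using le_max_of_le_right (hC₂ x)

theorem amPayoff_integrand_nonneg (K₁ K₂ : ℝ) (B : Set ℝ) (p : ℝ × ℝ) :
    0 ≤ B.indicator (fun x => max (K₁ - x) 0) p.1 + Bᶜ.indicator (fun _ => max (K₂ - p.2) 0) p.1 :=
  add_nonneg (indicator_nonneg (fun _ _ => le_max_right _ _) _)
    (indicator_nonneg (fun _ _ => le_max_right _ _) _)

theorem amPayoff_integrand_le_superhedge {K₁ K₂ : ℝ} {φ ψ θ₁ θ₂ : ℝ → ℝ}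
    (h1 : ∀ x y : ℝ, max (K₁ - x) 0 ≤ φ x + ψ y + θ₁ x * (y - x))
    (h2 : ∀ x y : ℝ, max (K₂ - y) 0 ≤ φ x + ψ y + θ₂ x * (y - x))
    (B : Set ℝ) [DecidablePred (· ∈ B)] (p : ℝ × ℝ) :
    B.indicator (fun x => max (K₁ - x) 0) p.1 + Bᶜ.indicator (fun _ => max (K₂ - p.2) 0) p.1
      ≤ φ p.1 + ψ p.2 + B.piecewise θ₁ θ₂ p.1 * (p.2 - p.1) := by
  by_cases hp : p.1 ∈ B
  · simpa [hp] using h1 p.1 p.2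
  · simpa [hp] using h2 p.1 p.2

theorem american_put_weak_duality_general
    (μ ν : Measure ℝ)
    (hμint : Integrable (fun x => x) μ) (hνint : Integrable (fun y => y) ν)
    (K₁ K₂ : ℝ)
    (π : Measure (ℝ × ℝ)) (hπ : IsMartingaleCoupling μ ν π)
    (B : Set ℝ) (hB : MeasurableSet B)
    (φ ψ : ℝ → ℝ)
    (hφint : Integrable φ μ) (hψint : Integrable ψ ν)
    (θ₁ θ₂ : ℝ → ℝ) (hθ₁m : Measurable θ₁) (hθ₂m : Measurable θ₂)
    (hθ₁b : ∃ C : ℝ, ∀ x, |θ₁ x| ≤ C) (hθ₂b : ∃ C : ℝ, ∀ x, |θ₂ x| ≤ C)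
    (h1 : ∀ x y : ℝ, max (K₁ - x) 0 ≤ φ x + ψ y + θ₁ x * (y - x))
    (h2 : ∀ x y : ℝ, max (K₂ - y) 0 ≤ φ x + ψ y + θ₂ x * (y - x)) :
    amPayoff K₁ K₂ π B ≤ (∫ x, φ x ∂μ) + ∫ y, ψ y ∂ν := by
  classical
  set θ := B.piecewise θ₁ θ₂
  have hθm : Measurable θ := hθ₁m.piecewise hB hθ₂m
  have hθb := exists_abs_piecewise_le B hθ₁b hθ₂b
  have hφπ := hπ.integrable_comp_fst hφint
  have hψπ := hπ.integrable_comp_snd hψint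
  have hθπ := hπ.integrable_mul_increment hμint hνint hθm hθb
  calc amPayoff K₁ K₂ π B
      ≤ ∫ p, (φ p.1 + ψ p.2 + θ p.1 * (p.2 - p.1)) ∂π :=
        integral_mono_of_nonneg (.of_forall (amPayoff_integrand_nonneg K₁ K₂ B))
          ((hφπ.add hψπ).add hθπ) (.of_forall (amPayoff_integrand_le_superhedge h1 h2 B))
    _ = (∫ p, φ p.1 ∂π) + (∫ p, ψ p.2 ∂π) + ∫ p, θ p.1 * (p.2 - p.1) ∂π := by
        rw [integral_add (f := fun p => φ p.1 + ψ p.2) (hφπ.add hψπ) hθπ, integral_add hφπ hψπ]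
    _ = (∫ x, φ x ∂μ) + ∫ y, ψ y ∂ν := by
        rw [hπ.integral_comp_fst hφint.1, hπ.integral_comp_snd hψint.1,
          hπ.integral_mul_increment_eq_zero hμint hνint hθm hθb, add_zero]

/-- Weak duality: any superhedge dominates the model-based American-put payoff. -/
theorem american_put_weak_duality
    (μ ν : Measure ℝ) [IsProbabilityMeasure μ] [IsProbabilityMeasure ν]
    (hμint : Integrable (fun x => x) μ) (hνint : Integrable (fun y => y) ν)
    (K₁ K₂ : ℝ) (hK : K₂ < K₁)
    (π : Measure (ℝ × ℝ)) (hπ : IsMartingaleCoupling μ ν π)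
    (B : Set ℝ) (hB : MeasurableSet B)
    (φ ψ : ℝ → ℝ) (hφm : Measurable φ) (hψm : Measurable ψ)
    (hφint : Integrable φ μ) (hψint : Integrable ψ ν)
    (θ₁ θ₂ : ℝ → ℝ) (hθ₁m : Measurable θ₁) (hθ₂m : Measurable θ₂)
    (hθ₁b : ∃ C : ℝ, ∀ x, |θ₁ x| ≤ C) (hθ₂b : ∃ C : ℝ, ∀ x, |θ₂ x| ≤ C)
    (h1 : ∀ x y : ℝ, max (K₁ - x) 0 ≤ φ x + ψ y + θ₁ x * (y - x))
    (h2 : ∀ x y : ℝ, max (K₂ - y) 0 ≤ φ x + ψ y + θ₂ x * (y - x)) :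
    amPayoff K₁ K₂ π B ≤ (∫ x, φ x ∂μ) + ∫ y, ψ y ∂ν :=
  american_put_weak_duality_general μ ν hμint hνint K₁ K₂ π hπ B hB φ ψ hφint hψint θ₁ θ₂ hθ₁m hθ₂m
    hθ₁b hθ₂b h1 h2
end

section
/- Let f, g : ℝ → ℝ be Borel measurable with f(x) ≤ x ≤ g(x) for all x, and let μ be a probability measure on ℝ with finite first moment such that ∫ 1_{g(x)>f(x)} · (g(x) − x)(x − f(x))/(g(x) − f(x)) dμ(x) < ∞. Define the kernel κ(x) = χ_{f(x),x,g(x)}, the measure ν(dy) = ∫ κ(x)(dy) dμ(x) (i.e. ν = μ bind κ), and π(dx,dy) = μ(dx) κ(x)(dy). Then ν is a probability measure with finite first moment, ∫ y dν(y) = ∫ x dμ(x), P_μ(k) ≤ P_ν(k) for all k ∈ ℝ, and π is a martingale coupling of μ and ν. -/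
/-! The two-point law `χ_{c,x,d}` is a probability measure with barycentre `x`, so the
disintegration `π = μ ⊗ χ_{f(x),x,g(x)}` is a martingale coupling once its second coordinate
is integrable, and Jensen's inequality for two-point laws gives `P_μ ≤ P_ν`. For integrability,
write `y = x + (y - x)`: the mean absolute deviation of `χ_{c,x,d}` about `x` is
`2 (d - x)(x - c) / (d - c)`, which is integrable against `μ` by hypothesis. -/

open MeasureTheory Set

/-- For `c ≤ x ≤ d`, the two-point martingale law `χ_{c,x,d}`. -/
noncomputable def chi (c x d : ℝ) : Measure ℝ :=
  if c < x ∧ x < d then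
    (ENNReal.ofReal ((d - x) / (d - c))) • Measure.dirac c
      + (ENNReal.ofReal ((x - c) / (d - c))) • Measure.dirac d
  else Measure.dirac x

open ProbabilityTheory

section Chi

variable {c x d : ℝ}

lemma chi_weights (h : c < x ∧ x < d) :
    0 ≤ (d - x) / (d - c) ∧ 0 ≤ (x - c) / (d - c) ∧
      (d - x) / (d - c) + (x - c) / (d - c) = 1 ∧
      (d - x) / (d - c) * c + (x - c) / (d - c) * d = x := by
  have hdc : 0 < d - c := by linarith [h.1, h.2]
  refine ⟨div_nonneg (by linarith [h.2]) hdc.le, div_nonneg (by linarith [h.1]) hdc.le, ?_, ?_⟩ <;>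
    field_simp <;> ring

instance isProbabilityMeasure_chi (c x d : ℝ) : IsProbabilityMeasure (chi c x d) := by
  unfold chi
  split_ifs with h
  · obtain ⟨ha, hb, hab, -⟩ := chi_weights h
    constructor
    simp [← ENNReal.ofReal_add ha hb, hab]
  · infer_instance

lemma integrable_chi (c x d : ℝ) (u : ℝ → ℝ) : Integrable u (chi c x d) := by
  have hdirac (a : ℝ) : Integrable u (Measure.dirac a) := integrable_dirac enorm_lt_top
  unfold chi
  split_ifs
  · exact ((hdirac c).smul_measure ENNReal.ofReal_ne_top).add_measure
      ((hdirac d).smul_measure ENNReal.ofReal_ne_top)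
  · exact hdirac x

lemma integral_chi (u : ℝ → ℝ) :
    ∫ y, u y ∂(chi c x d) =
      if c < x ∧ x < d then (d - x) / (d - c) * u c + (x - c) / (d - c) * u d else u x := by
  have hdirac (a : ℝ) : Integrable u (Measure.dirac a) := integrable_dirac enorm_lt_top
  unfold chi
  split_ifs with h
  · obtain ⟨ha, hb, -, -⟩ := chi_weights h
    rw [integral_add_measure ((hdirac c).smul_measure ENNReal.ofReal_ne_top)
        ((hdirac d).smul_measure ENNReal.ofReal_ne_top),
      integral_smul_measure, integral_smul_measure, integral_dirac, integral_dirac,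
      ENNReal.toReal_ofReal ha, ENNReal.toReal_ofReal hb, smul_eq_mul, smul_eq_mul]
  · exact integral_dirac u x

lemma integral_id_chi (c x d : ℝ) : ∫ y, y ∂(chi c x d) = x := by
  rw [integral_chi]
  split_ifs with h
  · exact (chi_weights h).2.2.2
  · rfl

lemma ConvexOn.le_integral_chi {φ : ℝ → ℝ} (hφ : ConvexOn ℝ univ φ) (c x d : ℝ) :
    φ x ≤ ∫ y, φ y ∂(chi c x d) := by
  rw [integral_chi]
  split_ifs with h
  · obtain ⟨ha, hb, hab, hx⟩ := chi_weights h
    simpa only [hx, smul_eq_mul] using hφ.2 (mem_univ c) (mem_univ d) ha hb hab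
  · rfl

lemma integral_abs_sub_chi (h₁ : c ≤ x) (h₂ : x ≤ d) :
    ∫ y, |y - x| ∂(chi c x d) = 2 * ((d - x) * (x - c) / (d - c)) := by
  rw [integral_chi]
  split_ifs with h
  · have hdc : d - c ≠ 0 := by linarith [h.1, h.2]
    rw [abs_of_nonpos (by linarith), abs_of_nonneg (by linarith)]
    field_simp
    ring
  · obtain rfl | rfl : x = c ∨ x = d := by
      by_contra! hne
      exact h ⟨lt_of_le_of_ne h₁ hne.1.symm, lt_of_le_of_ne h₂ hne.2⟩
    all_goals simp

lemma measurable_chi {f g : ℝ → ℝ} (hf : Measurable f) (hg : Measurable g) :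
    Measurable fun x => chi (f x) x (g x) := by
  unfold chi
  refine Measurable.ite ((measurableSet_lt hf measurable_id).inter
    (measurableSet_lt measurable_id hg)) ?_ (by fun_prop)
  refine Measure.measurable_of_measurable_coe _ fun s hs => ?_
  simp only [Measure.coe_add, Measure.coe_smul, Pi.add_apply, Pi.smul_apply, smul_eq_mul]
  have hdirac {h : ℝ → ℝ} (hh : Measurable h) : Measurable fun x => Measure.dirac (h x) s :=
    (Measure.measurable_coe hs).comp (Measure.measurable_dirac.comp hh)
  fun_prop

end Chi

noncomputable def chiKernel {f g : ℝ → ℝ} (hf : Measurable f) (hg : Measurable g) :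
    Kernel ℝ ℝ where
  toFun x := chi (f x) x (g x)
  measurable' := measurable_chi hf hg

instance {f g : ℝ → ℝ} (hf : Measurable f) (hg : Measurable g) :
    IsMarkovKernel (chiKernel hf hg) :=
  ⟨fun _ => isProbabilityMeasure_chi _ _ _⟩


section Coupling

lemma MeasureTheory.Measure.bind_map_prodMk_eq_compProd {α β : Type*} [MeasurableSpace α]
    [MeasurableSpace β] (μ : Measure α) [SFinite μ] (κ : Kernel α β) [IsSFiniteKernel κ] :
    μ.bind (fun x => (κ x).map (fun y => (x, y))) = μ ⊗ₘ κ := by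
  rw [Measure.compProd_eq_comp_prod]
  congr with x : 1
  rw [Kernel.prod_apply, Kernel.id_apply, Measure.dirac_prod]

lemma integral_le_integral_comp_of_le {α : Type*} [MeasurableSpace α] {μ : Measure α}
    [SFinite μ] {κ : Kernel α α} [IsSFiniteKernel κ] {φ : α → ℝ}
    (hμφ : Integrable φ μ) (hφ : Integrable φ (κ ∘ₘ μ)) (hle : ∀ x, φ x ≤ ∫ y, φ y ∂κ x) :
    ∫ x, φ x ∂μ ≤ ∫ y, φ y ∂(κ ∘ₘ μ) := by
  have hφ₂ : Integrable (fun p : α × α => φ p.2) (μ ⊗ₘ κ) :=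
    (Measure.integrable_compProd_snd_iff hφ.1).2 hφ
  rw [← Measure.snd_compProd, Measure.snd, integral_map measurable_snd.aemeasurable
    (by rw [← Measure.snd, Measure.snd_compProd]; exact hφ.1), Measure.integral_compProd hφ₂]
  exact integral_mono hμφ hφ₂.integral_compProd hle

variable {μ : Measure ℝ} {κ : Kernel ℝ ℝ}

lemma integrable_snd_compProd [SFinite μ] [IsMarkovKernel κ] (hμ : Integrable id μ)
    (hκ : ∀ x, Integrable id (κ x)) (hdev : Integrable (fun x => ∫ y, |y - x| ∂κ x) μ) :
    Integrable (fun p : ℝ × ℝ => p.2) (μ ⊗ₘ κ) := by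
  have hfst : Integrable (fun p : ℝ × ℝ => p.1) (μ ⊗ₘ κ) := by
    rw [← Measure.fst_compProd μ κ] at hμ
    exact hμ.comp_measurable measurable_fst
  have hsub : Integrable (fun p : ℝ × ℝ => p.2 - p.1) (μ ⊗ₘ κ) :=
    (Measure.integrable_compProd_iff (by fun_prop)).2
      ⟨ae_of_all _ fun x => (hκ x).sub (integrable_const x), by simpa using hdev⟩
  exact (hsub.add hfst).congr (ae_of_all _ fun p => sub_add_cancel p.2 p.1)

lemma IsMartingaleCoupling.compProd [IsProbabilityMeasure μ] [IsMarkovKernel κ]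
    (hmean : ∀ x, ∫ y, y ∂κ x = x) (hint : Integrable (fun p : ℝ × ℝ => p.2) (μ ⊗ₘ κ)) :
    IsMartingaleCoupling μ (κ ∘ₘ μ) (μ ⊗ₘ κ) := by
  refine ⟨inferInstance, Measure.fst_compProd μ κ, Measure.snd_compProd μ κ, fun B hB => ?_⟩
  rw [Measure.setIntegral_compProd hB MeasurableSet.univ hint.integrableOn]
  simp only [Measure.restrict_univ, hmean]

lemma IsMartingaleCoupling.integral_id_eq {μ ν : Measure ℝ} {π : Measure (ℝ × ℝ)}
    (h : IsMartingaleCoupling μ ν π) : ∫ y, y ∂ν = ∫ x, x ∂μ := by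
  obtain ⟨-, -, hν, hB⟩ := h
  rw [← hν, integral_map measurable_snd.aemeasurable measurable_id'.aestronglyMeasurable]
  simpa using hB univ MeasurableSet.univ

end Coupling
/-- Construction of a martingale coupling from functions `f ≤ id ≤ g`: the second
marginal `ν = μ bind χ_{f(x),x,g(x)}` is a probability measure with finite first
moment and the same mean, `μ ≤_cx ν`, and `π(dx,dy) = μ(dx) χ_{f(x),x,g(x)}(dy)`
is a martingale coupling of `μ` and `ν`. -/
theorem coupling_from_fg
    (f g : ℝ → ℝ) (hf : Measurable f) (hg : Measurable g)
    (hfg : ∀ x, f x ≤ x ∧ x ≤ g x)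
    (μ : Measure ℝ) [IsProbabilityMeasure μ]
    (hμint : Integrable (fun x => x) μ)
    (hint : Integrable
      (fun x => if f x < g x then (g x - x) * (x - f x) / (g x - f x) else 0) μ) :
    IsProbabilityMeasure (μ.bind (fun x => chi (f x) x (g x))) ∧
    Integrable (fun y => y) (μ.bind (fun x => chi (f x) x (g x))) ∧
    (∫ y, y ∂(μ.bind (fun x => chi (f x) x (g x))) = ∫ x, x ∂μ) ∧
    (∀ k : ℝ, putPrice μ k ≤ putPrice (μ.bind (fun x => chi (f x) x (g x))) k) ∧
    IsMartingaleCoupling μ (μ.bind (fun x => chi (f x) x (g x)))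
      (μ.bind (fun x => Measure.map (fun y => (x, y)) (chi (f x) x (g x)))) := by
  let κ := chiKernel hf hg
  have hν : μ.bind (fun x => chi (f x) x (g x)) = κ ∘ₘ μ := rfl
  have hπ : μ.bind (fun x => Measure.map (fun y => (x, y)) (chi (f x) x (g x))) = μ ⊗ₘ κ :=
    Measure.bind_map_prodMk_eq_compProd μ κ
  have hdev : Integrable (fun x => ∫ y, |y - x| ∂κ x) μ := by
    refine (hint.const_mul 2).congr (ae_of_all _ fun x => ?_)
    obtain ⟨h₁, h₂⟩ := hfg x
    change 2 * _ = ∫ y, |y - x| ∂chi (f x) x (g x)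
    rw [integral_abs_sub_chi h₁ h₂]
    split_ifs with h
    · rfl
    · -- `f x = g x`: the right-hand side vanishes by division by zero
      simp [le_antisymm (h₁.trans h₂) (not_lt.1 h)]
  have hsnd := integrable_snd_compProd hμint (fun x => integrable_chi _ _ _ _) hdev
  have hmart : IsMartingaleCoupling μ (κ ∘ₘ μ) (μ ⊗ₘ κ) :=
    .compProd (fun x => integral_id_chi _ _ _) hsnd
  have hνint : Integrable (fun y => y) (κ ∘ₘ μ) :=
    (Measure.integrable_compProd_snd_iff measurable_id'.aestronglyMeasurable).1 hsnd
  rw [hν, hπ]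
  refine ⟨inferInstance, hνint, hmart.integral_id_eq, fun k => ?_, hmart⟩
  have hput : ConvexOn ℝ univ fun y : ℝ => max (k - y) 0 :=
    ((convexOn_const k convex_univ).sub (concaveOn_id convex_univ)).sup
      (convexOn_const 0 convex_univ)
  exact integral_le_integral_comp_of_le ((integrable_const k).sub hμint).pos_part
    ((integrable_const k).sub hνint).pos_part fun x => hput.le_integral_chi _ _ _
end

section
/- Let K₂ < K₁ and a < K₁ be reals, and let f, g : [a, K₁] → ℝ be continuous with f strictly decreasing, g strictly increasing, f(x) < x < g(x) for all x ∈ [a, K₁], g(a) = K₁ and f(K₁) < K₂. Define Λ(x) = (g(x) − K₁)/(g(x) − x) − (K₁ − K₂)/(x − f(x)). Then there exists a unique x* ∈ (a, K₁) with Λ(x*) = 0; moreover f(x*) < K₂ and (K₂ − f(x*))/(g(x*) − f(x*)) = (K₁ − x*)/(g(x*) − x*) = 1 − (K₁ − K₂)/(x* − f(x*)). -/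
/-!
Λ is strictly increasing on `[a, K₁]`: writing `A = g x - K₁ ≥ 0`, its first term is
`A / (A + (K₁ - x))` with `A` increasing and `K₁ - x` decreasing, while its second term
`(K₁ - K₂) / (x - f x)` strictly decreases because `x - f x` strictly increases. Since
`Λ a = -(K₁ - K₂) / (a - f a) < 0` and `Λ K₁ = 1 - (K₁ - K₂) / (K₁ - f K₁) > 0`, the
intermediate value theorem gives the unique root. At the root, clearing denominators gives
`(g - K₁)(x - f) = (K₁ - K₂)(g - x)`, from which the remaining identities are linear consequences.
-/

open Set

theorem StrictMonoOn.existsUnique_mem_Ioo_eq {α δ : Type*} [ConditionallyCompleteLinearOrder α]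
    [TopologicalSpace α] [OrderTopology α] [DenselyOrdered α] [LinearOrder δ]
    [TopologicalSpace δ] [OrderClosedTopology δ] {φ : α → δ} {a b : α} {y : δ}
    (hφ : StrictMonoOn φ (Icc a b)) (hc : ContinuousOn φ (Icc a b)) (hab : a ≤ b)
    (ha : φ a < y) (hb : y < φ b) : ∃! x, x ∈ Ioo a b ∧ φ x = y := by
  obtain ⟨x, hx, rfl⟩ := intermediate_value_Ioo hab hc ⟨ha, hb⟩
  exact ⟨x, ⟨hx, rfl⟩, fun z ⟨hz, hzx⟩ =>
    hφ.injOn (Ioo_subset_Icc_self hz) (Ioo_subset_Icc_self hx) hzx⟩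

theorem div_add_le_div_add {A B c d : ℝ} (hA : 0 ≤ A) (hAB : A ≤ B) (hd : 0 ≤ d) (hdc : d ≤ c)
    (hAc : 0 < A + c) (hBd : 0 < B + d) : A / (A + c) ≤ B / (B + d) := by
  rw [div_le_div_iff₀ hAc hBd]
  nlinarith [mul_le_mul hAB hdc hd (hA.trans hAB)]

/-- The difference `Λ` of the slopes of the two chords of the superhedge construction. -/
noncomputable def chordSlopeDiff (K₁ K₂ : ℝ) (f g : ℝ → ℝ) (x : ℝ) : ℝ :=
  (g x - K₁) / (g x - x) - (K₁ - K₂) / (x - f x)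

section

variable {K₁ K₂ a : ℝ} {f g : ℝ → ℝ}

theorem monotoneOn_div_sub (hgm : MonotoneOn g (Icc a K₁)) (hga : K₁ ≤ g a)
    (hg : ∀ x ∈ Icc a K₁, x < g x) : MonotoneOn (fun x => (g x - K₁) / (g x - x)) (Icc a K₁) := by
  intro x hx y hy hxy
  have hsplit : ∀ z, g z - z = (g z - K₁) + (K₁ - z) := fun z => by ring
  have hgx : K₁ ≤ g x := hga.trans (hgm (left_mem_Icc.2 (hx.1.trans hx.2)) hx hx.1)
  dsimp only
  rw [hsplit x, hsplit y]
  exact div_add_le_div_add (sub_nonneg.2 hgx) (by linarith [hgm hx hy hxy]) (sub_nonneg.2 hy.2)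
    (by linarith) (by linarith [hg x hx]) (by linarith [hg y hy])

theorem strictAntiOn_div_sub_self {s : Set ℝ} {c : ℝ} (hc : 0 < c) (hf : AntitoneOn f s)
    (hfs : ∀ x ∈ s, f x < x) : StrictAntiOn (fun x => c / (x - f x)) s :=
  fun x hx y hy hxy =>
    div_lt_div_of_pos_left hc (sub_pos.2 (hfs x hx)) (by linarith [hf hx hy hxy.le])

theorem strictMonoOn_chordSlopeDiff (hK : K₂ < K₁) (hfa : AntitoneOn f (Icc a K₁))
    (hgm : MonotoneOn g (Icc a K₁)) (hga : K₁ ≤ g a)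
    (hfg : ∀ x ∈ Icc a K₁, f x < x ∧ x < g x) :
    StrictMonoOn (chordSlopeDiff K₁ K₂ f g) (Icc a K₁) := fun x hx y hy hxy => by
  have h₁ := monotoneOn_div_sub hgm hga (fun z hz => (hfg z hz).2) hx hy hxy.le
  have h₂ := strictAntiOn_div_sub_self (sub_pos.2 hK) hfa (fun z hz => (hfg z hz).1) hx hy hxy
  simp only [chordSlopeDiff] at h₁ h₂ ⊢
  linarith

theorem continuousOn_chordSlopeDiff {s : Set ℝ} (hfc : ContinuousOn f s) (hgc : ContinuousOn g s)
    (hfg : ∀ x ∈ s, f x < x ∧ x < g x) : ContinuousOn (chordSlopeDiff K₁ K₂ f g) s :=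
  ((hgc.sub continuousOn_const).div (hgc.sub continuousOn_id)
      fun x hx => (sub_pos.2 (hfg x hx).2).ne').sub
    (continuousOn_const.div (continuousOn_id.sub hfc) fun x hx => (sub_pos.2 (hfg x hx).1).ne')

theorem chordSlopeDiff_neg_of_eq (hK : K₂ < K₁) {x : ℝ} (hgx : g x = K₁) (hfx : f x < x) :
    chordSlopeDiff K₁ K₂ f g x < 0 := by
  have : 0 < (K₁ - K₂) / (x - f x) := div_pos (sub_pos.2 hK) (sub_pos.2 hfx)
  simp only [chordSlopeDiff, hgx, sub_self, zero_div]
  linarith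

theorem chordSlopeDiff_self_pos (hK : K₂ < K₁) (hg : K₁ < g K₁) (hf : f K₁ < K₂) :
    0 < chordSlopeDiff K₁ K₂ f g K₁ := by
  have : (K₁ - K₂) / (K₁ - f K₁) < 1 := (div_lt_one (by linarith)).2 (by linarith)
  simp only [chordSlopeDiff, div_self (sub_pos.2 hg).ne']
  linarith

theorem chordSlopeDiff_eq_zero_iff {x : ℝ} (hf : f x < x) (hg : x < g x) :
    chordSlopeDiff K₁ K₂ f g x = 0 ↔ (g x - K₁) * (x - f x) = (K₁ - K₂) * (g x - x) := by
  rw [chordSlopeDiff, sub_eq_zero, div_eq_div_iff (sub_pos.2 hg).ne' (sub_pos.2 hf).ne']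

theorem sub_lt_sub_of_chordSlopeDiff_eq_zero {x : ℝ} (hx : x < K₁) (hf : f x < x) (hg : x < g x)
    (hΛ : chordSlopeDiff K₁ K₂ f g x = 0) : K₁ - K₂ < x - f x := by
  have E := (chordSlopeDiff_eq_zero_iff hf hg).1 hΛ
  nlinarith [mul_lt_mul_of_pos_right (by linarith : g x - K₁ < g x - x) (sub_pos.2 hf)]

theorem div_eq_div_of_chordSlopeDiff_eq_zero {x : ℝ} (hf : f x < x) (hg : x < g x)
    (hΛ : chordSlopeDiff K₁ K₂ f g x = 0) :
    (K₂ - f x) / (g x - f x) = (K₁ - x) / (g x - x) := by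
  rw [div_eq_div_iff (by linarith) (by linarith)]
  linear_combination (chordSlopeDiff_eq_zero_iff hf hg).1 hΛ

theorem div_eq_one_sub_of_chordSlopeDiff_eq_zero {x : ℝ} (hg : x < g x)
    (hΛ : chordSlopeDiff K₁ K₂ f g x = 0) :
    (K₁ - x) / (g x - x) = 1 - (K₁ - K₂) / (x - f x) := by
  rw [← sub_eq_zero.1 hΛ, eq_sub_iff_add_eq, ← add_div, div_eq_one_iff_eq (by linarith)]
  ring

end

/-- Existence and uniqueness of the root `x*` of
`Λ(x) = (g(x)-K₁)/(g(x)-x) - (K₁-K₂)/(x-f(x))` on `(a, K₁)`, together with the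
identities satisfied at the root. -/
theorem unique_root_of_Lambda
    (K₁ K₂ a : ℝ) (hK : K₂ < K₁) (ha : a < K₁)
    (f g : ℝ → ℝ)
    (hfc : ContinuousOn f (Set.Icc a K₁)) (hgc : ContinuousOn g (Set.Icc a K₁))
    (hfa : StrictAntiOn f (Set.Icc a K₁)) (hgm : StrictMonoOn g (Set.Icc a K₁))
    (hfg : ∀ x ∈ Set.Icc a K₁, f x < x ∧ x < g x)
    (hga : g a = K₁) (hfK : f K₁ < K₂) :
    (∃! xs : ℝ, xs ∈ Set.Ioo a K₁ ∧
        (g xs - K₁) / (g xs - xs) - (K₁ - K₂) / (xs - f xs) = 0) ∧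
    (∀ xs ∈ Set.Ioo a K₁,
      (g xs - K₁) / (g xs - xs) - (K₁ - K₂) / (xs - f xs) = 0 →
      f xs < K₂ ∧
      (K₂ - f xs) / (g xs - f xs) = (K₁ - xs) / (g xs - xs) ∧
      (K₁ - xs) / (g xs - xs) = 1 - (K₁ - K₂) / (xs - f xs)) := by
  have haK : a ∈ Icc a K₁ := left_mem_Icc.2 ha.le
  have hKK : K₁ ∈ Icc a K₁ := right_mem_Icc.2 ha.le
  refine ⟨StrictMonoOn.existsUnique_mem_Ioo_eq
    (strictMonoOn_chordSlopeDiff hK hfa.antitoneOn hgm.monotoneOn hga.ge hfg)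
    (continuousOn_chordSlopeDiff hfc hgc hfg) ha.le
    (chordSlopeDiff_neg_of_eq hK hga (hfg a haK).1)
    (chordSlopeDiff_self_pos hK (hfg K₁ hKK).2 hfK), fun x hx hΛ => ?_⟩
  obtain ⟨hf, hg⟩ := hfg x (Ioo_subset_Icc_self hx)
  replace hΛ : chordSlopeDiff K₁ K₂ f g x = 0 := hΛ
  have hgap := sub_lt_sub_of_chordSlopeDiff_eq_zero hx.2 hf hg hΛ
  exact ⟨by linarith [hx.2],
    div_eq_div_of_chordSlopeDiff_eq_zero hf hg hΛ,
    div_eq_one_sub_of_chordSlopeDiff_eq_zero hg hΛ⟩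
end

section
/- Let μ and ν be atomless probability measures on ℝ with finite first moments, and let f < x < g and K₂ < K₁ be reals with f < K₂, x < K₁ < g. Suppose the mass and mean equations hold: μ((f,x)) = ν((f,g)) and ∫_{(f,x)} w dμ(w) = ∫_{(f,g)} w dν(w), and that Θ := (K₂ − f)/(g − f) satisfies Θ = (K₁ − x)/(g − x). Then ∫_{(−∞,x)} (K₁ − w) dμ(w) + ∫_{(−∞,f)} (K₂ − w) dν(w) − ∫_{(−∞,f)} (K₂ − w) dμ(w) = Θ·P_ν(g) + (1 − Θ)·P_ν(f) + (1 − Θ)·(P_μ(x) − P_μ(f)); i.e. the model-based expected payoff of the American put equals the superhedging cost. -/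
open MeasureTheory Set

/-!
Writing `P_η(k) = ∫_{(-∞,k)} (k - w) dη` and splitting every such integral at `f`, both sides
become affine in `η((-∞,f))` and `∫_{(-∞,f)} w dη` for `η = μ, ν`, and in the mass and mean of
`μ` on `(f,x)`, which by hypothesis equal those of `ν` on `(f,g)`. The sides then agree
exactly because `Θ` interpolates both strikes: `K₂ = f + Θ (g - f)` and `K₁ = x + Θ (g - x)`.
-/

section

variable {η : Measure ℝ}

theorem putPrice_eq_setIntegral_Iio (k : ℝ) :
    putPrice η k = ∫ w in Iio k, (k - w) ∂η := by
  have hmax : (fun w => max (k - w) 0) = (Iio k).indicator (fun w => k - w) := by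
    funext w
    by_cases hw : w < k
    · simp [hw, hw.le]
    · simp [hw, not_lt.1 hw]
  rw [putPrice, hmax, integral_indicator measurableSet_Iio]

theorem setIntegral_Iio_eq_add_Ioo [NullSingletonClass η] {φ : ℝ → ℝ} {a b : ℝ}
    (hφ : IntegrableOn φ (Iio b) η) (hab : a ≤ b) :
    ∫ w in Iio b, φ w ∂η = (∫ w in Iio a, φ w ∂η) + ∫ w in Ioo a b, φ w ∂η := by
  have hdisj : Disjoint (Iio a) (Ico a b) :=
    (Iio_disjoint_Ici le_rfl).mono_right Ico_subset_Ici_self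
  rw [← Iio_union_Ico_eq_Iio hab] at hφ ⊢
  rw [setIntegral_union hdisj measurableSet_Ico hφ.left_of_union hφ.right_of_union,
    setIntegral_congr_set (Ioo_ae_eq_Ico (μ := η))]

theorem setIntegral_const_sub [IsFiniteMeasure η] {s : Set ℝ}
    (hs : IntegrableOn (fun w => w) s η) (c : ℝ) :
    ∫ w in s, (c - w) ∂η = c * η.real s - ∫ w in s, w ∂η := by
  rw [integral_sub (integrable_const c) hs, setIntegral_const, smul_eq_mul, mul_comm]

end

theorem mbep_eq_hedging_cost_general
    (μ ν : Measure ℝ) [IsProbabilityMeasure μ] [IsProbabilityMeasure ν]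
    (hμint : Integrable (fun w => w) μ) (hνint : Integrable (fun w => w) ν)
    (hμa : ∀ w : ℝ, μ {w} = 0) (hνa : ∀ w : ℝ, ν {w} = 0)
    (f x g K₁ K₂ : ℝ)
    (hfx : f < x) (hxg : x < g)
    (hmass : μ (Set.Ioo f x) = ν (Set.Ioo f g))
    (hmean : ∫ w in Set.Ioo f x, w ∂μ = ∫ w in Set.Ioo f g, w ∂ν)
    (hΘ : (K₂ - f) / (g - f) = (K₁ - x) / (g - x)) :
    (∫ w in Set.Iio x, (K₁ - w) ∂μ) + (∫ w in Set.Iio f, (K₂ - w) ∂ν)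
        - (∫ w in Set.Iio f, (K₂ - w) ∂μ)
      = ((K₂ - f) / (g - f)) * putPrice ν g
        + (1 - (K₂ - f) / (g - f)) * putPrice ν f
        + (1 - (K₂ - f) / (g - f)) * (putPrice μ x - putPrice μ f) := by
  have : NullSingletonClass μ := ⟨hμa⟩
  have : NullSingletonClass ν := ⟨hνa⟩
  have hK₂ : f + (K₂ - f) / (g - f) * (g - f) = K₂ := by
    rw [div_mul_cancel₀ _ (sub_ne_zero.2 (hfx.trans hxg).ne')]; ring
  have hK₁ : x + (K₂ - f) / (g - f) * (g - x) = K₁ := by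
    rw [hΘ, div_mul_cancel₀ _ (sub_ne_zero.2 hxg.ne')]; ring
  generalize (K₂ - f) / (g - f) = Θ at hK₂ hK₁ ⊢
  have hmass' : μ.real (Ioo f x) = ν.real (Ioo f g) := by simp only [measureReal_def, hmass]
  simp only [putPrice_eq_setIntegral_Iio]
  have hfg : f ≤ g := (hfx.trans hxg).le
  rw [setIntegral_Iio_eq_add_Ioo (φ := (K₁ - ·))
      ((integrable_const _).sub hμint).integrableOn hfx.le,
    setIntegral_Iio_eq_add_Ioo (φ := (g - ·))
      ((integrable_const _).sub hνint).integrableOn hfg,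
    setIntegral_Iio_eq_add_Ioo (φ := (x - ·))
      ((integrable_const _).sub hμint).integrableOn hfx.le]
  simp only [setIntegral_const_sub hμint.integrableOn, setIntegral_const_sub hνint.integrableOn,
    hmass', hmean]
  linear_combination (μ.real (Iio f) - ν.real (Iio f)) * hK₂
    - (μ.real (Iio f) + ν.real (Ioo f g)) * hK₁

/-- Under the mass and mean equations and the slope condition defining `Θ`, the
model-based expected payoff of the American put equals the superhedging cost. -/
theorem mbep_eq_hedging_cost
    (μ ν : Measure ℝ) [IsProbabilityMeasure μ] [IsProbabilityMeasure ν]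
    (hμint : Integrable (fun w => w) μ) (hνint : Integrable (fun w => w) ν)
    (hμa : ∀ w : ℝ, μ {w} = 0) (hνa : ∀ w : ℝ, ν {w} = 0)
    (f x g K₁ K₂ : ℝ)
    (hfx : f < x) (hxg : x < g) (hK : K₂ < K₁)
    (hfK₂ : f < K₂) (hxK₁ : x < K₁) (hK₁g : K₁ < g)
    (hmass : μ (Set.Ioo f x) = ν (Set.Ioo f g))
    (hmean : ∫ w in Set.Ioo f x, w ∂μ = ∫ w in Set.Ioo f g, w ∂ν)
    (hΘ : (K₂ - f) / (g - f) = (K₁ - x) / (g - x)) :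
    (∫ w in Set.Iio x, (K₁ - w) ∂μ) + (∫ w in Set.Iio f, (K₂ - w) ∂ν)
        - (∫ w in Set.Iio f, (K₂ - w) ∂μ)
      = ((K₂ - f) / (g - f)) * putPrice ν g
        + (1 - (K₂ - f) / (g - f)) * putPrice ν f
        + (1 - (K₂ - f) / (g - f)) * (putPrice μ x - putPrice μ f) :=
  mbep_eq_hedging_cost_general μ ν hμint hνint hμa hνa f x g K₁ K₂ hfx hxg hmass hmean hΘ
end

section
/- Let μ and ν be atomless probability measures on ℝ with finite first moments, and let f' < K₂ < x' ≤ K₁ with K₂ < K₁, and suppose μ((f',x')) = ν((f',x')) and ∫_{(f',x')} w dμ(w) = ∫_{(f',x')} w dν(w). Suppose there exists a martingale coupling π of μ and ν with π({(x,y) : x ≤ f' and y > f'}) = 0, π({(x,y) : f' < x < x' and ¬(f' < y < x')}) = 0, π({(x,y) : x ≥ x' and f' < y < x'}) = 0, and π({(x,y) : x' ≤ x < K₁ and y ≤ f'}) = 0. Then, with Θ := (K₂ − f')/(x' − f') and D(k) := P_ν(k) − P_μ(k), the supremum of A(π',B) over all martingale couplings π' of μ and ν and all Borel sets B equals P_μ(K₁)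 + Θ·D(x') + (1 − Θ)·D(f'), and it is attained by π' = π with B = (−∞, K₁). -/
open MeasureTheory Set

/-! ### Auxiliary hedge functions -/

/-- The static hedge `ψ(y) = Θ(x'-y)⁺ + (1-Θ)(f'-y)⁺`. -/
noncomputable def psiW (f' x' Θ y : ℝ) : ℝ :=
  Θ * max (x' - y) 0 + (1 - Θ) * max (f' - y) 0

/-- A (negated) subgradient selection for `psiW`. -/
noncomputable def gW (f' x' Θ x : ℝ) : ℝ :=
  if x ≤ f' then -1 else if x < x' then -Θ else 0

section PointwiseLemmas

variable {f' x' K₁ K₂ Θ : ℝ}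

lemma psiW_nonneg (hΘ0 : 0 ≤ Θ) (hΘ1 : Θ ≤ 1) (y : ℝ) : 0 ≤ psiW f' x' Θ y := by
  have h1 : (0:ℝ) ≤ max (x' - y) 0 := le_max_right _ _
  have h2 : (0:ℝ) ≤ max (f' - y) 0 := le_max_right _ _
  unfold psiW; nlinarith

lemma psiW_cont : Continuous (psiW f' x' Θ) := by
  unfold psiW; fun_prop

lemma gW_measurable : Measurable (gW f' x' Θ) := by
  unfold gW
  exact Measurable.ite measurableSet_Iic measurable_const
    (Measurable.ite measurableSet_Iio measurable_const measurable_const)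

lemma le_psiW (hΘ0 : 0 ≤ Θ) (hΘ1 : Θ ≤ 1) (hid : Θ * x' + (1 - Θ) * f' = K₂) (y : ℝ) :
    max (K₂ - y) 0 ≤ psiW f' x' Θ y := by
  refine max_le ?_ (psiW_nonneg hΘ0 hΘ1 y)
  have h1 : x' - y ≤ max (x' - y) 0 := le_max_left _ _
  have h2 : f' - y ≤ max (f' - y) 0 := le_max_left _ _
  unfold psiW
  nlinarith [mul_le_mul_of_nonneg_left h1 hΘ0,
    mul_le_mul_of_nonneg_left h2 (by linarith : (0:ℝ) ≤ 1 - Θ)]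

lemma subgradW (hf : f' < x') (hΘ0 : 0 ≤ Θ) (hΘ1 : Θ ≤ 1) (x y : ℝ) :
    psiW f' x' Θ x + gW f' x' Θ x * (y - x) ≤ psiW f' x' Θ y := by
  have h1 : x' - y ≤ max (x' - y) 0 := le_max_left _ _
  have h2 : f' - y ≤ max (f' - y) 0 := le_max_left _ _
  have h1' : (0:ℝ) ≤ max (x' - y) 0 := le_max_right _ _
  have h2' : (0:ℝ) ≤ max (f' - y) 0 := le_max_right _ _
  unfold psiW gW
  split_ifs with hx1 hx2
  · rw [max_eq_left (by linarith : (0:ℝ) ≤ x' - x), max_eq_left (by linarith : (0:ℝ) ≤ f' - x)]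
    nlinarith [mul_le_mul_of_nonneg_left h1 hΘ0,
      mul_le_mul_of_nonneg_left h2 (by linarith : (0:ℝ) ≤ 1 - Θ)]
  · rw [max_eq_left (by linarith : (0:ℝ) ≤ x' - x), max_eq_right (by linarith : f' - x ≤ 0)]
    nlinarith [mul_le_mul_of_nonneg_left h1 hΘ0,
      mul_le_mul_of_nonneg_left h2' (by linarith : (0:ℝ) ≤ 1 - Θ)]
  · rw [max_eq_right (by linarith : x' - x ≤ 0), max_eq_right (by linarith : f' - x ≤ 0)]
    nlinarith

lemma psiW_le (hf'K₂ : f' < K₂) (hK₂x' : K₂ < x') (hx'K₁ : x' ≤ K₁)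
    (hΘ0 : 0 ≤ Θ) (hΘ1 : Θ ≤ 1) (hid : Θ * x' + (1 - Θ) * f' = K₂) (x : ℝ) :
    psiW f' x' Θ x ≤ max (K₁ - x) 0 := by
  have h1 : K₁ - x ≤ max (K₁ - x) 0 := le_max_left _ _
  have h0 : (0:ℝ) ≤ max (K₁ - x) 0 := le_max_right _ _
  unfold psiW
  rcases le_or_gt x f' with hx | hx
  · rw [max_eq_left (by linarith : (0:ℝ) ≤ x' - x), max_eq_left (by linarith : (0:ℝ) ≤ f' - x)]
    nlinarith
  · rcases le_or_gt x x' with hx2 | hx2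
    · rw [max_eq_left (by linarith : (0:ℝ) ≤ x' - x), max_eq_right (by linarith : f' - x ≤ 0)]
      nlinarith [mul_nonneg (by linarith : (0:ℝ) ≤ 1 - Θ) (by linarith : (0:ℝ) ≤ x' - x)]
    · rw [max_eq_right (by linarith : x' - x ≤ 0), max_eq_right (by linarith : f' - x ≤ 0)]
      nlinarith

lemma psiW_zero (hf : f' < x') (hx : x' ≤ x) : psiW f' x' Θ x = 0 := by
  unfold psiW
  rw [max_eq_right (by linarith : x' - x ≤ 0), max_eq_right (by linarith : f' - x ≤ 0)]
  ring

end PointwiseLemmas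

section CouplingLemmas

variable {μ ν : Measure ℝ} {π : Measure (ℝ × ℝ)} {f' x' K₁ K₂ Θ : ℝ}

lemma mc_int_fst (h : IsMartingaleCoupling μ ν π) {F : ℝ → ℝ} (hF : Integrable F μ) :
    Integrable (fun p : ℝ × ℝ => F p.1) π := by
  have := (integrable_map_measure (f := Prod.fst) (g := F) (μ := π)
    (by rw [h.2.1]; exact hF.1) measurable_fst.aemeasurable).mp (by rw [h.2.1]; exact hF)
  exact this

lemma mc_int_snd (h : IsMartingaleCoupling μ ν π) {F : ℝ → ℝ} (hF : Integrable F ν) :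
    Integrable (fun p : ℝ × ℝ => F p.2) π := by
  have := (integrable_map_measure (f := Prod.snd) (g := F) (μ := π)
    (by rw [h.2.2.1]; exact hF.1) measurable_snd.aemeasurable).mp (by rw [h.2.2.1]; exact hF)
  exact this

lemma mc_integral_snd (h : IsMartingaleCoupling μ ν π) {F : ℝ → ℝ}
    (hF : AEStronglyMeasurable F ν) :
    ∫ p, F p.2 ∂π = ∫ y, F y ∂ν := by
  have := integral_map (φ := Prod.snd) (μ := π) measurable_snd.aemeasurable (f := F)
    (by rw [h.2.2.1]; exact hF)
  rw [h.2.2.1] at this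
  exact this.symm

lemma mc_setIntegral_fst (h : IsMartingaleCoupling μ ν π) {F : ℝ → ℝ}
    (hF : AEStronglyMeasurable F μ) {B : Set ℝ} (hB : MeasurableSet B) :
    ∫ p in B ×ˢ (Set.univ : Set ℝ), F p.1 ∂π = ∫ x in B, F x ∂μ := by
  have := setIntegral_map (g := Prod.fst) (μ := π) (f := F) (s := B) hB
    (by rw [h.2.1]; exact hF) measurable_fst.aemeasurable
  rw [h.2.1] at this
  rw [Set.prod_univ]
  exact this.symm

lemma mc_mart_zero (h : IsMartingaleCoupling μ ν π) (hμint : Integrable (fun w => w) μ)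
    (hνint : Integrable (fun w => w) ν) {B : Set ℝ} (hB : MeasurableSet B) :
    ∫ p in B ×ˢ (Set.univ : Set ℝ), (p.2 - p.1) ∂π = 0 := by
  have i1 : Integrable (fun p : ℝ × ℝ => p.1) π := mc_int_fst h hμint
  have i2 : Integrable (fun p : ℝ × ℝ => p.2) π := mc_int_snd h hνint
  have e1 : ∫ p in B ×ˢ (Set.univ : Set ℝ), p.1 ∂π = ∫ x in B, x ∂μ :=
    mc_setIntegral_fst h hμint.1 hB
  have e2 := h.2.2.2 B hB
  rw [integral_sub i2.integrableOn i1.integrableOn, e1, e2, sub_self]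

lemma int_put {η : Measure ℝ} [IsFiniteMeasure η] (hη : Integrable (fun w => w) η) (k : ℝ) :
    Integrable (fun w => max (k - w) 0) η := by
  have h : Integrable (fun w : ℝ => k - w) η := (integrable_const k).sub hη
  simpa using h.pos_part

lemma int_psiW {η : Measure ℝ} [IsFiniteMeasure η] (hη : Integrable (fun w => w) η) :
    Integrable (psiW f' x' Θ) η := by
  have := ((int_put hη x').const_mul Θ).add ((int_put hη f').const_mul (1 - Θ))
  exact this

lemma integral_psiW {η : Measure ℝ} [IsFiniteMeasure η] (hη : Integrable (fun w => w) η) :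
    ∫ y, psiW f' x' Θ y ∂η = Θ * putPrice η x' + (1 - Θ) * putPrice η f' := by
  unfold psiW putPrice
  rw [integral_add ((int_put hη x').const_mul Θ) ((int_put hη f').const_mul (1 - Θ)),
    integral_const_mul, integral_const_mul]

/-- The decomposition of the dynamic-hedge term as indicators of products. -/
lemma gW_decomp (B : Set ℝ) :
    (fun p : ℝ × ℝ => B.indicator (gW f' x' Θ) p.1 * (p.2 - p.1))
      = (fun p : ℝ × ℝ =>
          (-1 : ℝ) * ((B ∩ Iic f') ×ˢ (Set.univ : Set ℝ)).indicator (fun q => q.2 - q.1) p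
          + (-Θ) * ((B ∩ Ioo f' x') ×ˢ (Set.univ : Set ℝ)).indicator (fun q => q.2 - q.1) p) := by
  funext p
  by_cases hpB : p.1 ∈ B
  · rw [Set.indicator_of_mem hpB]
    unfold gW
    by_cases hp1 : p.1 ≤ f'
    · rw [if_pos hp1,
        Set.indicator_of_mem
          (Set.mem_prod.mpr ⟨Set.mem_inter hpB (Set.mem_Iic.mpr hp1), Set.mem_univ p.2⟩),
        Set.indicator_of_notMem
          (fun hc => absurd hc.1.2.1 (not_lt.mpr hp1))]
      ring
    · rw [if_neg hp1]
      by_cases hp2 : p.1 < x'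
      · rw [if_pos hp2,
          Set.indicator_of_notMem (fun hc => hp1 hc.1.2),
          Set.indicator_of_mem
            (Set.mem_prod.mpr
              ⟨Set.mem_inter hpB (Set.mem_Ioo.mpr ⟨not_le.mp hp1, hp2⟩), Set.mem_univ p.2⟩)]
        ring
      · rw [if_neg hp2,
          Set.indicator_of_notMem (fun hc => hp1 hc.1.2),
          Set.indicator_of_notMem (fun hc => hp2 hc.1.2.2)]
        ring
  · rw [Set.indicator_of_notMem hpB,
      Set.indicator_of_notMem (fun hc => hpB hc.1.1),
      Set.indicator_of_notMem (fun hc => hpB hc.1.1)]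
    ring

/-- The integral of the superhedging function under any martingale coupling. -/
lemma mc_integral_G (h : IsMartingaleCoupling μ ν π)
    (hμint : Integrable (fun w => w) μ) (hνint : Integrable (fun w => w) ν)
    [IsProbabilityMeasure μ] [IsProbabilityMeasure ν]
    {B : Set ℝ} (hB : MeasurableSet B) :
    ∫ p, ((B ×ˢ (Set.univ : Set ℝ)).indicator
          (fun q => max (K₁ - q.1) 0 - psiW f' x' Θ q.1) p
        - B.indicator (gW f' x' Θ) p.1 * (p.2 - p.1) + psiW f' x' Θ p.2) ∂π
      = (∫ x in B, (max (K₁ - x) 0 - psiW f' x' Θ x) ∂μ) + ∫ y, psiW f' x' Θ y ∂ν := by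
  have i1 : Integrable (fun p : ℝ × ℝ => p.1) π := mc_int_fst h hμint
  have i2 : Integrable (fun p : ℝ × ℝ => p.2) π := mc_int_snd h hνint
  have iyx : Integrable (fun p : ℝ × ℝ => p.2 - p.1) π := i2.sub i1
  have iΦμ : Integrable (fun x => max (K₁ - x) 0 - psiW f' x' Θ x) μ :=
    (int_put hμint K₁).sub (int_psiW hμint)
  have iT1 : Integrable
      ((B ×ˢ (Set.univ : Set ℝ)).indicator (fun q : ℝ × ℝ => max (K₁ - q.1) 0 - psiW f' x' Θ q.1)) π :=
    (mc_int_fst h iΦμ).indicator (hB.prod MeasurableSet.univ)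
  have iI1 : Integrable (((B ∩ Iic f') ×ˢ (Set.univ : Set ℝ)).indicator
      (fun q : ℝ × ℝ => q.2 - q.1)) π :=
    iyx.indicator ((hB.inter measurableSet_Iic).prod MeasurableSet.univ)
  have iI2 : Integrable (((B ∩ Ioo f' x') ×ˢ (Set.univ : Set ℝ)).indicator
      (fun q : ℝ × ℝ => q.2 - q.1)) π :=
    iyx.indicator ((hB.inter measurableSet_Ioo).prod MeasurableSet.univ)
  have iT2 : Integrable (fun p : ℝ × ℝ => B.indicator (gW f' x' Θ) p.1 * (p.2 - p.1)) π := by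
    rw [gW_decomp]
    exact (iI1.const_mul _).add (iI2.const_mul _)
  have iT3 : Integrable (fun p : ℝ × ℝ => psiW f' x' Θ p.2) π :=
    mc_int_snd h (int_psiW hνint)
  have iT12 : Integrable (fun p : ℝ × ℝ =>
      (B ×ˢ (Set.univ : Set ℝ)).indicator (fun q => max (K₁ - q.1) 0 - psiW f' x' Θ q.1) p
      - B.indicator (gW f' x' Θ) p.1 * (p.2 - p.1)) π := iT1.sub iT2
  rw [integral_add iT12 iT3, integral_sub iT1 iT2]
  have hT1 : ∫ p, (B ×ˢ (Set.univ : Set ℝ)).indicator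
      (fun q : ℝ × ℝ => max (K₁ - q.1) 0 - psiW f' x' Θ q.1) p ∂π
      = ∫ x in B, (max (K₁ - x) 0 - psiW f' x' Θ x) ∂μ := by
    rw [integral_indicator (hB.prod MeasurableSet.univ)]
    exact mc_setIntegral_fst h iΦμ.1 hB
  have hT2 : ∫ p, B.indicator (gW f' x' Θ) p.1 * (p.2 - p.1) ∂π = 0 := by
    rw [gW_decomp, integral_add (iI1.const_mul _) (iI2.const_mul _),
      integral_const_mul, integral_const_mul,
      integral_indicator ((hB.inter measurableSet_Iic).prod MeasurableSet.univ),
      integral_indicator ((hB.inter measurableSet_Ioo).prod MeasurableSet.univ),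
      mc_mart_zero h hμint hνint (hB.inter measurableSet_Iic),
      mc_mart_zero h hμint hνint (hB.inter measurableSet_Ioo)]
    ring
  have hT3 : ∫ p, psiW f' x' Θ p.2 ∂π = ∫ y, psiW f' x' Θ y ∂ν :=
    mc_integral_snd h psiW_cont.aestronglyMeasurable
  rw [hT1, hT2, hT3]
  ring

end CouplingLemmas

section MainLemmas

variable {μ ν : Measure ℝ} {π : Measure (ℝ × ℝ)} {f' x' K₁ K₂ Θ : ℝ}

lemma amPayoff_le_bound [IsProbabilityMeasure μ] [IsProbabilityMeasure ν]
    (h : IsMartingaleCoupling μ ν π)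
    (hμint : Integrable (fun w => w) μ) (hνint : Integrable (fun w => w) ν)
    (hf'K₂ : f' < K₂) (hK₂x' : K₂ < x') (hx'K₁ : x' ≤ K₁)
    (hΘ0 : 0 ≤ Θ) (hΘ1 : Θ ≤ 1) (hid : Θ * x' + (1 - Θ) * f' = K₂)
    {B : Set ℝ} (hB : MeasurableSet B) :
    amPayoff K₁ K₂ π B
      ≤ (∫ x, (max (K₁ - x) 0 - psiW f' x' Θ x) ∂μ) + ∫ y, psiW f' x' Θ y ∂ν := by
  haveI := h.1
  have hfx : f' < x' := lt_trans hf'K₂ hK₂x'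
  have i1 : Integrable (fun p : ℝ × ℝ => p.1) π := mc_int_fst h hμint
  have i2 : Integrable (fun p : ℝ × ℝ => p.2) π := mc_int_snd h hνint
  have iyx : Integrable (fun p : ℝ × ℝ => p.2 - p.1) π := i2.sub i1
  have iΦμ : Integrable (fun x => max (K₁ - x) 0 - psiW f' x' Θ x) μ :=
    (int_put hμint K₁).sub (int_psiW hμint)
  have iT1 : Integrable
      ((B ×ˢ (Set.univ : Set ℝ)).indicator (fun q : ℝ × ℝ => max (K₁ - q.1) 0 - psiW f' x' Θ q.1)) π :=
    (mc_int_fst h iΦμ).indicator (hB.prod MeasurableSet.univ)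
  have iT2 : Integrable (fun p : ℝ × ℝ => B.indicator (gW f' x' Θ) p.1 * (p.2 - p.1)) π := by
    rw [gW_decomp]
    exact ((iyx.indicator ((hB.inter measurableSet_Iic).prod MeasurableSet.univ)).const_mul _).add
      ((iyx.indicator ((hB.inter measurableSet_Ioo).prod MeasurableSet.univ)).const_mul _)
  have iT3 : Integrable (fun p : ℝ × ℝ => psiW f' x' Θ p.2) π :=
    mc_int_snd h (int_psiW hνint)
  have iG : Integrable (fun p : ℝ × ℝ =>
      (B ×ˢ (Set.univ : Set ℝ)).indicator (fun q => max (K₁ - q.1) 0 - psiW f' x' Θ q.1) p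
        - B.indicator (gW f' x' Θ) p.1 * (p.2 - p.1) + psiW f' x' Θ p.2) π :=
    (iT1.sub iT2).add iT3
  have hHeq : (fun p : ℝ × ℝ => B.indicator (fun x => max (K₁ - x) 0) p.1
      + Bᶜ.indicator (fun _ => max (K₂ - p.2) 0) p.1)
      = fun p : ℝ × ℝ => (B ×ˢ (Set.univ : Set ℝ)).indicator (fun q => max (K₁ - q.1) 0) p
        + (Bᶜ ×ˢ (Set.univ : Set ℝ)).indicator (fun q : ℝ × ℝ => max (K₂ - q.2) 0) p := by
    funext p
    by_cases hp : p.1 ∈ B <;>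
      simp [Set.indicator_apply, Set.mem_prod, hp]
  have iH : Integrable (fun p : ℝ × ℝ => B.indicator (fun x => max (K₁ - x) 0) p.1
      + Bᶜ.indicator (fun _ => max (K₂ - p.2) 0) p.1) π := by
    rw [hHeq]
    exact ((mc_int_fst h (int_put hμint K₁)).indicator (hB.prod MeasurableSet.univ)).add
      ((mc_int_snd h (int_put hνint K₂)).indicator (hB.compl.prod MeasurableSet.univ))
  have hpt : ∀ p : ℝ × ℝ, B.indicator (fun x => max (K₁ - x) 0) p.1
      + Bᶜ.indicator (fun _ => max (K₂ - p.2) 0) p.1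
      ≤ (B ×ˢ (Set.univ : Set ℝ)).indicator (fun q => max (K₁ - q.1) 0 - psiW f' x' Θ q.1) p
        - B.indicator (gW f' x' Θ) p.1 * (p.2 - p.1) + psiW f' x' Θ p.2 := by
    intro p
    by_cases hp : p.1 ∈ B
    · have hmem : p ∈ B ×ˢ (Set.univ : Set ℝ) := ⟨hp, trivial⟩
      rw [Set.indicator_of_mem hp, Set.indicator_of_notMem (by simp [hp] : p.1 ∉ Bᶜ),
        Set.indicator_of_mem hmem, Set.indicator_of_mem hp]
      have := subgradW hfx hΘ0 hΘ1 p.1 p.2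
      linarith
    · rw [Set.indicator_of_notMem hp, Set.indicator_of_mem (by simp [hp] : p.1 ∈ Bᶜ),
        Set.indicator_of_notMem (fun hc => hp hc.1), Set.indicator_of_notMem hp]
      have := le_psiW hΘ0 hΘ1 hid p.2
      linarith
  calc amPayoff K₁ K₂ π B
      ≤ ∫ p, ((B ×ˢ (Set.univ : Set ℝ)).indicator
              (fun q => max (K₁ - q.1) 0 - psiW f' x' Θ q.1) p
            - B.indicator (gW f' x' Θ) p.1 * (p.2 - p.1) + psiW f' x' Θ p.2) ∂π :=
        integral_mono iH iG hpt
    _ = (∫ x in B, (max (K₁ - x) 0 - psiW f' x' Θ x) ∂μ) + ∫ y, psiW f' x' Θ y ∂ν :=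
        mc_integral_G h hμint hνint hB
    _ ≤ (∫ x, (max (K₁ - x) 0 - psiW f' x' Θ x) ∂μ) + ∫ y, psiW f' x' Θ y ∂ν := by
        refine add_le_add_left (setIntegral_le_integral iΦμ ?_) _
        exact Filter.Eventually.of_forall fun x =>
          sub_nonneg.mpr (psiW_le hf'K₂ hK₂x' hx'K₁ hΘ0 hΘ1 hid x)

lemma amPayoff_eq_bound [IsProbabilityMeasure μ] [IsProbabilityMeasure ν]
    (h : IsMartingaleCoupling μ ν π)
    (hμint : Integrable (fun w => w) μ) (hνint : Integrable (fun w => w) ν)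
    (hf'K₂ : f' < K₂) (hK₂x' : K₂ < x') (hx'K₁ : x' ≤ K₁)
    (hΘ0 : 0 ≤ Θ) (hΘ1 : Θ ≤ 1) (hid : Θ * x' + (1 - Θ) * f' = K₂)
    (h1 : π {p : ℝ × ℝ | p.1 ≤ f' ∧ f' < p.2} = 0)
    (h2 : π {p : ℝ × ℝ | f' < p.1 ∧ p.1 < x' ∧ ¬ (f' < p.2 ∧ p.2 < x')} = 0)
    (h3 : π {p : ℝ × ℝ | x' ≤ p.1 ∧ f' < p.2 ∧ p.2 < x'} = 0)
    (h4 : π {p : ℝ × ℝ | x' ≤ p.1 ∧ p.1 < K₁ ∧ p.2 ≤ f'} = 0) :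
    amPayoff K₁ K₂ π (Set.Iio K₁)
      = (∫ x, (max (K₁ - x) 0 - psiW f' x' Θ x) ∂μ) + ∫ y, psiW f' x' Θ y ∂ν := by
  haveI := h.1
  have hfx : f' < x' := lt_trans hf'K₂ hK₂x'
  set N : Set (ℝ × ℝ) := ({p : ℝ × ℝ | p.1 ≤ f' ∧ f' < p.2}
      ∪ {p : ℝ × ℝ | f' < p.1 ∧ p.1 < x' ∧ ¬ (f' < p.2 ∧ p.2 < x')}
      ∪ {p : ℝ × ℝ | x' ≤ p.1 ∧ f' < p.2 ∧ p.2 < x'})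
      ∪ {p : ℝ × ℝ | x' ≤ p.1 ∧ p.1 < K₁ ∧ p.2 ≤ f'} with hNdef
  have hN : π N = 0 :=
    measure_union_null (measure_union_null (measure_union_null h1 h2) h3) h4
  have hae : ∀ᵐ p ∂π, p ∉ N := by
    rw [MeasureTheory.ae_iff]
    simpa using hN
  have heq : (fun p : ℝ × ℝ => (Set.Iio K₁).indicator (fun x => max (K₁ - x) 0) p.1
      + (Set.Iio K₁)ᶜ.indicator (fun _ => max (K₂ - p.2) 0) p.1)
      =ᵐ[π] fun p : ℝ × ℝ =>
        ((Set.Iio K₁) ×ˢ (Set.univ : Set ℝ)).indicator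
          (fun q => max (K₁ - q.1) 0 - psiW f' x' Θ q.1) p
        - (Set.Iio K₁).indicator (gW f' x' Θ) p.1 * (p.2 - p.1) + psiW f' x' Θ p.2 := by
    filter_upwards [hae] with p hp
    rw [hNdef] at hp
    simp only [Set.mem_union, Set.mem_setOf_eq, not_or] at hp
    obtain ⟨⟨⟨hp1, hp2⟩, hp3⟩, hp4⟩ := hp
    by_cases hxK : p.1 < K₁
    · have hmemB : p.1 ∈ Set.Iio K₁ := hxK
      have hmem : p ∈ (Set.Iio K₁) ×ˢ (Set.univ : Set ℝ) := ⟨hmemB, trivial⟩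
      rw [Set.indicator_of_mem hmemB, Set.indicator_of_notMem (by simp [hxK] : p.1 ∉ (Set.Iio K₁)ᶜ),
        Set.indicator_of_mem hmem, Set.indicator_of_mem hmemB]
      have key : psiW f' x' Θ p.2 = psiW f' x' Θ p.1 + gW f' x' Θ p.1 * (p.2 - p.1) := by
        rcases le_or_gt p.1 f' with hxf | hxf
        · have hyf : p.2 ≤ f' := by
            by_contra hc
            exact hp1 ⟨hxf, not_le.mp hc⟩
          unfold psiW gW
          rw [if_pos hxf,
            max_eq_left (by linarith : (0:ℝ) ≤ x' - p.1),
            max_eq_left (by linarith : (0:ℝ) ≤ f' - p.1),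
            max_eq_left (by linarith : (0:ℝ) ≤ x' - p.2),
            max_eq_left (by linarith : (0:ℝ) ≤ f' - p.2)]
          ring
        · rcases lt_or_ge p.1 x' with hxx | hxx
          · have hy : f' < p.2 ∧ p.2 < x' := by
              by_contra hc
              exact hp2 ⟨hxf, hxx, hc⟩
            unfold psiW gW
            rw [if_neg (not_le.mpr hxf), if_pos hxx,
              max_eq_left (by linarith : (0:ℝ) ≤ x' - p.1),
              max_eq_right (by linarith : f' - p.1 ≤ 0),
              max_eq_left (by linarith : (0:ℝ) ≤ x' - p.2),
              max_eq_right (by linarith : f' - p.2 ≤ 0)]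
            ring
          · have hyf : f' < p.2 := by
              by_contra hc
              exact hp4 ⟨hxx, hxK, not_lt.mp hc⟩
            have hyx : x' ≤ p.2 := by
              by_contra hc
              exact hp3 ⟨hxx, hyf, not_le.mp hc⟩
            rw [psiW_zero hfx hxx, psiW_zero hfx hyx]
            unfold gW
            rw [if_neg (not_le.mpr (lt_trans hf'K₂ (lt_of_lt_of_le hK₂x' hxx))),
              if_neg (not_lt.mpr hxx)]
            ring
      rw [key]
      ring
    · have hxK' : K₁ ≤ p.1 := not_lt.mp hxK
      have hxx : x' ≤ p.1 := le_trans hx'K₁ hxK'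
      rw [Set.indicator_of_notMem (by simpa using hxK : p.1 ∉ Set.Iio K₁),
        Set.indicator_of_mem (by simpa using hxK : p.1 ∈ (Set.Iio K₁)ᶜ),
        Set.indicator_of_notMem (fun hc => hxK hc.1),
        Set.indicator_of_notMem (by simpa using hxK : p.1 ∉ Set.Iio K₁)]
      have key : max (K₂ - p.2) 0 = psiW f' x' Θ p.2 := by
        rcases le_or_gt p.2 f' with hyf | hyf
        · unfold psiW
          rw [max_eq_left (by linarith : K₂ - p.2 ≥ 0),
            max_eq_left (by linarith : (0:ℝ) ≤ x' - p.2),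
            max_eq_left (by linarith : (0:ℝ) ≤ f' - p.2)]
          linear_combination -hid
        · have hyx : x' ≤ p.2 := by
            by_contra hc
            exact hp3 ⟨hxx, hyf, not_le.mp hc⟩
          rw [psiW_zero hfx hyx, max_eq_right (by linarith : K₂ - p.2 ≤ 0)]
      rw [key]
      ring
  have iΦμ : Integrable (fun x => max (K₁ - x) 0 - psiW f' x' Θ x) μ :=
    (int_put hμint K₁).sub (int_psiW hμint)
  have step : amPayoff K₁ K₂ π (Set.Iio K₁)
      = (∫ x in Set.Iio K₁, (max (K₁ - x) 0 - psiW f' x' Θ x) ∂μ) + ∫ y, psiW f' x' Θ y ∂ν := by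
    unfold amPayoff
    rw [integral_congr_ae heq]
    exact mc_integral_G h hμint hνint measurableSet_Iio
  have hcompl : ∫ x in (Set.Iio K₁)ᶜ, (max (K₁ - x) 0 - psiW f' x' Θ x) ∂μ = 0 := by
    have hEq : Set.EqOn (fun x => max (K₁ - x) 0 - psiW f' x' Θ x) (fun _ => (0:ℝ))
        (Set.Iio K₁)ᶜ := by
      intro x hx
      have hxK : K₁ ≤ x := not_lt.mp (by simpa using hx)
      have hz : psiW f' x' Θ x = 0 := psiW_zero hfx (le_trans hx'K₁ hxK)
      simp [hz, max_eq_right (by linarith : K₁ - x ≤ 0)]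
    rw [setIntegral_congr_fun measurableSet_Iio.compl hEq, integral_zero]
  have hsplit := integral_add_compl (measurableSet_Iio : MeasurableSet (Set.Iio K₁)) iΦμ
  have hfull : ∫ x in Set.Iio K₁, (max (K₁ - x) 0 - psiW f' x' Θ x) ∂μ
      = ∫ x, (max (K₁ - x) 0 - psiW f' x' Θ x) ∂μ := by
    rw [← hsplit, hcompl, add_zero]
  rw [step, hfull]

lemma value_eq [IsProbabilityMeasure μ] [IsProbabilityMeasure ν]
    (hμint : Integrable (fun w => w) μ) (hνint : Integrable (fun w => w) ν) :
    (∫ x, (max (K₁ - x) 0 - psiW f' x' Θ x) ∂μ) + ∫ y, psiW f' x' Θ y ∂ν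
      = putPrice μ K₁ + Θ * (putPrice ν x' - putPrice μ x')
        + (1 - Θ) * (putPrice ν f' - putPrice μ f') := by
  rw [integral_sub (int_put hμint K₁) (int_psiW hμint), integral_psiW hμint, integral_psiW hνint]
  unfold putPrice
  ring

end MainLemmas

/-- Region `W`: with `f' < K₂ < x' ≤ K₁` and a coupling keeping `(f',x')` invariant,
the highest American-put price equals `P_μ(K₁) + Θ·D(x') + (1-Θ)·D(f')` with
`Θ = (K₂-f')/(x'-f')` and `D = P_ν - P_μ`, attained with exercise set `(-∞, K₁)`. -/
theorem optimal_model_region_W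
    (μ ν : Measure ℝ) [IsProbabilityMeasure μ] [IsProbabilityMeasure ν]
    (hμint : Integrable (fun w => w) μ) (hνint : Integrable (fun w => w) ν)
    (hμa : ∀ w : ℝ, μ {w} = 0) (hνa : ∀ w : ℝ, ν {w} = 0)
    (f' x' K₁ K₂ : ℝ)
    (hf'K₂ : f' < K₂) (hK₂x' : K₂ < x') (hx'K₁ : x' ≤ K₁) (hK : K₂ < K₁)
    (hmass : μ (Set.Ioo f' x') = ν (Set.Ioo f' x'))
    (hmean : ∫ w in Set.Ioo f' x', w ∂μ = ∫ w in Set.Ioo f' x', w ∂ν)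
    (π : Measure (ℝ × ℝ)) (hπ : IsMartingaleCoupling μ ν π)
    (h1 : π {p : ℝ × ℝ | p.1 ≤ f' ∧ f' < p.2} = 0)
    (h2 : π {p : ℝ × ℝ | f' < p.1 ∧ p.1 < x' ∧ ¬ (f' < p.2 ∧ p.2 < x')} = 0)
    (h3 : π {p : ℝ × ℝ | x' ≤ p.1 ∧ f' < p.2 ∧ p.2 < x'} = 0)
    (h4 : π {p : ℝ × ℝ | x' ≤ p.1 ∧ p.1 < K₁ ∧ p.2 ≤ f'} = 0) :
    sSup { r : ℝ | ∃ π' : Measure (ℝ × ℝ), ∃ B : Set ℝ,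
        IsMartingaleCoupling μ ν π' ∧ MeasurableSet B ∧ r = amPayoff K₁ K₂ π' B }
      = putPrice μ K₁
        + ((K₂ - f') / (x' - f')) * (putPrice ν x' - putPrice μ x')
        + (1 - (K₂ - f') / (x' - f')) * (putPrice ν f' - putPrice μ f') ∧
    amPayoff K₁ K₂ π (Set.Iio K₁)
      = putPrice μ K₁
        + ((K₂ - f') / (x' - f')) * (putPrice ν x' - putPrice μ x')
        + (1 - (K₂ - f') / (x' - f')) * (putPrice ν f' - putPrice μ f') := by
  have hfx : f' < x' := lt_trans hf'K₂ hK₂x'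
  set Θ : ℝ := (K₂ - f') / (x' - f') with hΘdef
  have hne : x' - f' ≠ 0 := ne_of_gt (by linarith)
  have hΘ0 : 0 ≤ Θ := div_nonneg (by linarith) (by linarith)
  have hΘ1 : Θ ≤ 1 := (div_le_one (by linarith)).mpr (by linarith)
  have hid : Θ * x' + (1 - Θ) * f' = K₂ := by
    rw [hΘdef]
    field_simp
    ring
  have hatt : amPayoff K₁ K₂ π (Set.Iio K₁)
      = putPrice μ K₁ + Θ * (putPrice ν x' - putPrice μ x')
        + (1 - Θ) * (putPrice ν f' - putPrice μ f') :=
    (amPayoff_eq_bound hπ hμint hνint hf'K₂ hK₂x' hx'K₁ hΘ0 hΘ1 hid h1 h2 h3 h4).trans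
      (value_eq hμint hνint)
  have hub : ∀ r ∈ { r : ℝ | ∃ π' : Measure (ℝ × ℝ), ∃ B : Set ℝ,
      IsMartingaleCoupling μ ν π' ∧ MeasurableSet B ∧ r = amPayoff K₁ K₂ π' B },
      r ≤ putPrice μ K₁ + Θ * (putPrice ν x' - putPrice μ x')
        + (1 - Θ) * (putPrice ν f' - putPrice μ f') := by
    rintro r ⟨π', B, hc, hB, rfl⟩
    calc amPayoff K₁ K₂ π' B
        ≤ (∫ x, (max (K₁ - x) 0 - psiW f' x' Θ x) ∂μ) + ∫ y, psiW f' x' Θ y ∂ν :=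
          amPayoff_le_bound hc hμint hνint hf'K₂ hK₂x' hx'K₁ hΘ0 hΘ1 hid hB
      _ = _ := value_eq hμint hνint
  have hmem : putPrice μ K₁ + Θ * (putPrice ν x' - putPrice μ x')
      + (1 - Θ) * (putPrice ν f' - putPrice μ f')
      ∈ { r : ℝ | ∃ π' : Measure (ℝ × ℝ), ∃ B : Set ℝ,
        IsMartingaleCoupling μ ν π' ∧ MeasurableSet B ∧ r = amPayoff K₁ K₂ π' B } :=
    ⟨π, Set.Iio K₁, hπ, measurableSet_Iio, hatt.symm⟩
  exact ⟨IsGreatest.csSup_eq ⟨hmem, hub⟩, hatt⟩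
end

section
/- Let μ and ν be atomless probability measures on ℝ with finite first moments, and let x' < x'' < g'' and K₁ be reals with x'' < K₁ < g''. Suppose μ((x',x'')) = ν((x',g'')) and ∫_{(x',x'')} w dμ(w) = ∫_{(x',g'')} w dν(w). Then, with Θ₂ := (K₁ − x'')/(g'' − x''), one has Θ₂·[P_ν(g'') − P_ν(x') − P_μ(x'') + P_μ(x')] = (K₁ − x'')·μ((−∞,x'')) + Θ₂·(g'' − x')·(ν((−∞,x')) − μ((−∞,x'))). -/
open MeasureTheory Set

/-!
For `a ≤ b`, `P_η(b) - P_η(a) = (b - a) η((-∞, a]) + b η((a, b)) - ∫_{(a, b)} w dη`.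
Applied to `ν` on `(x', g'')` and to `μ` on `(x', x'')`, the mass and mean equations make the
interval integrals cancel, leaving `(g'' - x'') μ((x', x''))`; the absence of an atom at `x'`
turns the closed half-lines into open ones, and `μ((-∞, x'')) = μ((-∞, x']) + μ((x', x''))`.
-/

lemma integrable_max_sub_zero {η : Measure ℝ} [IsFiniteMeasure η]
    (hint : Integrable (fun x => x) η) (k : ℝ) :
    Integrable (fun x => max (k - x) 0) η :=
  ((integrable_const k).sub hint).pos_part

lemma max_sub_zero_sub_max_sub_zero {a b : ℝ} (hab : a ≤ b) (x : ℝ) :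
    max (b - x) 0 - max (a - x) 0
      = (Iic a).indicator (fun _ => b - a) x + (Ioo a b).indicator (fun y => b - y) x := by
  simp only [indicator, mem_Iic, mem_Ioo]
  split_ifs <;> grind

lemma putPrice_sub_putPrice {η : Measure ℝ} [IsFiniteMeasure η]
    (hint : Integrable (fun x => x) η) {a b : ℝ} (hab : a ≤ b) :
    putPrice η b - putPrice η a
      = (b - a) * (η (Iic a)).toReal
        + (b * (η (Ioo a b)).toReal - ∫ x in Ioo a b, x ∂η) := by
  have hIic : Integrable ((Iic a).indicator fun _ => b - a) η :=
    (integrable_const _).indicator measurableSet_Iic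
  have hIoo : Integrable ((Ioo a b).indicator fun y => b - y) η :=
    ((integrable_const b).sub hint).indicator measurableSet_Ioo
  rw [putPrice, putPrice, ← integral_sub (integrable_max_sub_zero hint b)
    (integrable_max_sub_zero hint a)]
  simp_rw [max_sub_zero_sub_max_sub_zero hab]
  rw [integral_add hIic hIoo, integral_indicator_const _ measurableSet_Iic,
    integral_indicator measurableSet_Ioo, integral_sub (integrable_const b).integrableOn
    hint.integrableOn, setIntegral_const]
  simp only [smul_eq_mul, measureReal_def]
  ring

theorem put_price_identity_G_general
    (μ ν : Measure ℝ) [IsProbabilityMeasure μ] [IsProbabilityMeasure ν]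
    (hμint : Integrable (fun w => w) μ) (hνint : Integrable (fun w => w) ν)
    (hμa : ∀ w : ℝ, μ {w} = 0) (hνa : ∀ w : ℝ, ν {w} = 0)
    (x' x'' g'' K₁ : ℝ)
    (h1 : x' < x'') (h2 : x'' < g'')
    (hmass : μ (Set.Ioo x' x'') = ν (Set.Ioo x' g''))
    (hmean : ∫ w in Set.Ioo x' x'', w ∂μ = ∫ w in Set.Ioo x' g'', w ∂ν) :
    ((K₁ - x'') / (g'' - x'')) *
        (putPrice ν g'' - putPrice ν x' - putPrice μ x'' + putPrice μ x')
      = (K₁ - x'') * (μ (Set.Iio x'')).toReal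
        + ((K₁ - x'') / (g'' - x'')) * (g'' - x') *
            ((ν (Set.Iio x')).toReal - (μ (Set.Iio x')).toReal) := by
  have hν := putPrice_sub_putPrice hνint (h1.trans h2).le
  have hμ := putPrice_sub_putPrice hμint h1.le
  rw [measure_congr (Iio_ae_eq_Iic' (hνa x')).symm, ← hmass, ← hmean] at hν
  rw [measure_congr (Iio_ae_eq_Iic' (hμa x')).symm] at hμ
  have hsplit : μ (Iio x'') = μ (Iio x') + μ (Ioo x' x'') := by
    rw [← Iic_union_Ioo_eq_Iio h1, measure_union ((Iic_disjoint_Ioc le_rfl).mono_right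
      Ioo_subset_Ioc_self) measurableSet_Ioo, measure_congr (Iio_ae_eq_Iic' (hμa x'))]
  have hbracket : putPrice ν g'' - putPrice ν x' - putPrice μ x'' + putPrice μ x'
      = (g'' - x') * (ν (Iio x')).toReal - (x'' - x') * (μ (Iio x')).toReal
        + (g'' - x'') * (μ (Ioo x' x'')).toReal := by
    linear_combination hν - hμ
  rw [hbracket, hsplit, ENNReal.toReal_add (measure_ne_top _ _) (measure_ne_top _ _)]
  field_simp [sub_ne_zero.2 h2.ne']
  ring

/-- Put-price identity used in the region `G` computation: with
`Θ₂ = (K₁-x'')/(g''-x'')`, under the mass and mean equations on `(x',x'') → (x',g'')`,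
`Θ₂·[P_ν(g'') - P_ν(x') - P_μ(x'') + P_μ(x')]`
` = (K₁-x'')·μ((-∞,x'')) + Θ₂·(g''-x')·(ν((-∞,x')) - μ((-∞,x')))`. -/
theorem put_price_identity_G
    (μ ν : Measure ℝ) [IsProbabilityMeasure μ] [IsProbabilityMeasure ν]
    (hμint : Integrable (fun w => w) μ) (hνint : Integrable (fun w => w) ν)
    (hμa : ∀ w : ℝ, μ {w} = 0) (hνa : ∀ w : ℝ, ν {w} = 0)
    (x' x'' g'' K₁ : ℝ)
    (h1 : x' < x'') (h2 : x'' < g'') (h3 : x'' < K₁) (h4 : K₁ < g'')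
    (hmass : μ (Set.Ioo x' x'') = ν (Set.Ioo x' g''))
    (hmean : ∫ w in Set.Ioo x' x'', w ∂μ = ∫ w in Set.Ioo x' g'', w ∂ν) :
    ((K₁ - x'') / (g'' - x'')) *
        (putPrice ν g'' - putPrice ν x' - putPrice μ x'' + putPrice μ x')
      = (K₁ - x'') * (μ (Set.Iio x'')).toReal
        + ((K₁ - x'') / (g'' - x'')) * (g'' - x') *
            ((ν (Set.Iio x')).toReal - (μ (Set.Iio x')).toReal) :=
  put_price_identity_G_general μ ν hμint hνint hμa hνa x' x'' g'' K₁ h1 h2 hmass hmean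
end

section
/- Let μ and ν be atomless probability measures on ℝ with finite first moments, and let f' < x' < x'' < g'' and K₂ < K₁ be reals with f' < K₂ and x'' < K₁ < g''. Suppose μ((f',x')) = ν((f',x')), ∫_{(f',x')} w dμ(w) = ∫_{(f',x')} w dν(w), μ((x',x'')) = ν((x',g'')), and ∫_{(x',x'')} w dμ(w) = ∫_{(x',g'')} w dν(w). Set Θ₂ = (K₁ − x'')/(g'' − x''), Δ = (g'' − x')·Θ₂, Θ₁ = ((K₂ − f') − Δ)/(x' − f'), and D(k) = P_ν(k) − P_μ(k). Then P_μ(x'') + (K₁ − x'')·μ((−∞,x'')) + D(f') + (K₂ − f')·(ν((−∞,f')) − μ((−∞,f'))) = Θ₂·P_ν(g'') + (1 − Θ₁)·D(f') + (1 − Θ₂)·P_μ(x'') + (Θ₁ − Θ₂)·D(x'); i.e. the model-based expected payoff of the American put equals the cost of the superhedge generated by the piecewise-linear function ψ^{x',x''}. -/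
open MeasureTheory Set

section

variable {η : Measure ℝ}

theorem putPrice_eq_sub_setIntegral [IsFiniteMeasure η] (hη : Integrable (fun x => x) η)
    (k : ℝ) : putPrice η k = k * η.real (Iio k) - ∫ x in Iio k, x ∂η := by
  have h_restrict : ∫ x, max (k - x) 0 ∂η = ∫ x in Iio k, max (k - x) 0 ∂η :=
    (setIntegral_eq_integral_of_forall_compl_eq_zero fun x hx =>
      max_eq_right (sub_nonpos.2 (not_lt.1 hx))).symm
  rw [putPrice, h_restrict,
    setIntegral_congr_fun measurableSet_Iio fun x hx => max_eq_left (sub_nonneg.2 (le_of_lt hx)),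
    integral_sub (integrable_const k).integrableOn hη.integrableOn, setIntegral_const,
    smul_eq_mul, mul_comm]

theorem measureReal_Ioo_eq_sub [IsFiniteMeasure η] [NullSingletonClass η] {a b : ℝ}
    (hab : a ≤ b) : η.real (Ioo a b) = η.real (Iio b) - η.real (Iio a) := by
  rw [measureReal_congr Ioo_ae_eq_Ico, ← Iio_sdiff_Iio,
    measureReal_sdiff (Iio_subset_Iio hab) measurableSet_Iio]

theorem setIntegral_Ioo_eq_sub {E : Type*} [NormedAddCommGroup E] [NormedSpace ℝ E]
    [NullSingletonClass η] {f : ℝ → E} {a b : ℝ} (hf : IntegrableOn f (Iio b) η) (hab : a ≤ b) :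
    ∫ x in Ioo a b, f x ∂η = ∫ x in Iio b, f x ∂η - ∫ x in Iio a, f x ∂η := by
  rw [setIntegral_congr_set Ioo_ae_eq_Ico, ← Iio_sdiff_Iio,
    setIntegral_sdiff measurableSet_Iio hf (Iio_subset_Iio hab)]

end

theorem mbep_eq_hc_region_G_general
    (μ ν : Measure ℝ) [IsProbabilityMeasure μ] [IsProbabilityMeasure ν]
    (hμint : Integrable (fun w => w) μ) (hνint : Integrable (fun w => w) ν)
    (hμa : ∀ w : ℝ, μ {w} = 0) (hνa : ∀ w : ℝ, ν {w} = 0)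
    (f' x' x'' g'' K₁ K₂ : ℝ)
    (h1 : f' < x') (h2 : x' < x'') (h3 : x'' < g'')
    (hmass1 : μ (Set.Ioo f' x') = ν (Set.Ioo f' x'))
    (hmean1 : ∫ w in Set.Ioo f' x', w ∂μ = ∫ w in Set.Ioo f' x', w ∂ν)
    (hmass2 : μ (Set.Ioo x' x'') = ν (Set.Ioo x' g''))
    (hmean2 : ∫ w in Set.Ioo x' x'', w ∂μ = ∫ w in Set.Ioo x' g'', w ∂ν)
    (Θ₂ Δ Θ₁ : ℝ)
    (hΘ₂ : Θ₂ = (K₁ - x'') / (g'' - x''))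
    (hΔ : Δ = (g'' - x') * Θ₂)
    (hΘ₁ : Θ₁ = ((K₂ - f') - Δ) / (x' - f')) :
    putPrice μ x'' + (K₁ - x'') * (μ (Set.Iio x'')).toReal
        + (putPrice ν f' - putPrice μ f')
        + (K₂ - f') * ((ν (Set.Iio f')).toReal - (μ (Set.Iio f')).toReal)
      = Θ₂ * putPrice ν g''
        + (1 - Θ₁) * (putPrice ν f' - putPrice μ f')
        + (1 - Θ₂) * putPrice μ x''
        + (Θ₁ - Θ₂) * (putPrice ν x' - putPrice μ x') := by
  have : NullSingletonClass μ := ⟨hμa⟩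
  have : NullSingletonClass ν := ⟨hνa⟩
  have hx'g'' : x' ≤ g'' := (h2.trans h3).le
  have mass1 : μ.real (Iio x') - μ.real (Iio f') = ν.real (Iio x') - ν.real (Iio f') := by
    rw [← measureReal_Ioo_eq_sub h1.le, ← measureReal_Ioo_eq_sub h1.le, measureReal_def, measureReal_def, hmass1]
  have mass2 : μ.real (Iio x'') - μ.real (Iio x') = ν.real (Iio g'') - ν.real (Iio x') := by
    rw [← measureReal_Ioo_eq_sub h2.le, ← measureReal_Ioo_eq_sub hx'g'', measureReal_def, measureReal_def, hmass2]
  have mean1 : (∫ w in Iio x', w ∂μ) - ∫ w in Iio f', w ∂μ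
      = (∫ w in Iio x', w ∂ν) - ∫ w in Iio f', w ∂ν := by
    rw [← setIntegral_Ioo_eq_sub hμint.integrableOn h1.le,
      ← setIntegral_Ioo_eq_sub hνint.integrableOn h1.le, hmean1]
  have mean2 : (∫ w in Iio x'', w ∂μ) - ∫ w in Iio x', w ∂μ
      = (∫ w in Iio g'', w ∂ν) - ∫ w in Iio x', w ∂ν := by
    rw [← setIntegral_Ioo_eq_sub hμint.integrableOn h2.le,
      ← setIntegral_Ioo_eq_sub hνint.integrableOn hx'g'', hmean2]
  have hΘ₂' : Θ₂ * (g'' - x'') = K₁ - x'' := by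
    rw [hΘ₂, div_mul_cancel₀ _ (sub_ne_zero.2 h3.ne')]
  have hΘ₁' : Θ₁ * (x' - f') = (K₂ - f') - (g'' - x') * Θ₂ := by
    rw [hΘ₁, hΔ, div_mul_cancel₀ _ (sub_ne_zero.2 h1.ne')]
  simp only [putPrice_eq_sub_setIntegral hμint, putPrice_eq_sub_setIntegral hνint,
    ← measureReal_def]
  linear_combination (-μ.real (Iio x'')) * hΘ₂' + (Θ₂ * g'') * mass2 - Θ₂ * mean2
    + (Θ₂ * g'' + (Θ₁ - Θ₂) * x') * mass1 - Θ₁ * mean1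
    + (μ.real (Iio f') - ν.real (Iio f')) * hΘ₁'

/-- Region `G`: the model-based expected payoff of the American put equals the cost of
the superhedge generated by the piecewise-linear function `ψ^{x',x''}`. -/
theorem mbep_eq_hc_region_G
    (μ ν : Measure ℝ) [IsProbabilityMeasure μ] [IsProbabilityMeasure ν]
    (hμint : Integrable (fun w => w) μ) (hνint : Integrable (fun w => w) ν)
    (hμa : ∀ w : ℝ, μ {w} = 0) (hνa : ∀ w : ℝ, ν {w} = 0)
    (f' x' x'' g'' K₁ K₂ : ℝ)
    (h1 : f' < x') (h2 : x' < x'') (h3 : x'' < g'') (hK : K₂ < K₁)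
    (h4 : f' < K₂) (h5 : x'' < K₁) (h6 : K₁ < g'')
    (hmass1 : μ (Set.Ioo f' x') = ν (Set.Ioo f' x'))
    (hmean1 : ∫ w in Set.Ioo f' x', w ∂μ = ∫ w in Set.Ioo f' x', w ∂ν)
    (hmass2 : μ (Set.Ioo x' x'') = ν (Set.Ioo x' g''))
    (hmean2 : ∫ w in Set.Ioo x' x'', w ∂μ = ∫ w in Set.Ioo x' g'', w ∂ν)
    (Θ₂ Δ Θ₁ : ℝ)
    (hΘ₂ : Θ₂ = (K₁ - x'') / (g'' - x''))
    (hΔ : Δ = (g'' - x') * Θ₂)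
    (hΘ₁ : Θ₁ = ((K₂ - f') - Δ) / (x' - f')) :
    putPrice μ x'' + (K₁ - x'') * (μ (Set.Iio x'')).toReal
        + (putPrice ν f' - putPrice μ f')
        + (K₂ - f') * ((ν (Set.Iio f')).toReal - (μ (Set.Iio f')).toReal)
      = Θ₂ * putPrice ν g''
        + (1 - Θ₁) * (putPrice ν f' - putPrice μ f')
        + (1 - Θ₂) * putPrice μ x''
        + (Θ₁ - Θ₂) * (putPrice ν x' - putPrice μ x') :=
  mbep_eq_hc_region_G_general μ ν hμint hνint hμa hνa f' x' x'' g'' K₁ K₂ h1 h2 h3 hmass1 hmean1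
    hmass2 hmean2 Θ₂ Δ Θ₁ hΘ₂ hΔ hΘ₁
end

section
/- Let μ and ν be probability measures on ℝ with finite first moments, let π be a martingale coupling of μ and ν, and suppose K₁ ≤ K₂. Then for every Borel set B ⊆ ℝ the American-put payoff satisfies A(π,B) ≤ P_ν(K₂), and A(π,∅) = P_ν(K₂); hence the supremum over all martingale couplings and all Borel sets of the payoff equals P_ν(K₂). -/
open MeasureTheory Set

/-!
Exercising at a point of `B` earns `(K₁ - X)⁺`, which on `{X < K₁}` is `K₁ - X`. Over any
`X`-measurable set its integral equals that of `K₁ - Y` by the martingale property, and since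
`K₁ ≤ K₂` the latter is dominated by `(K₂ - Y)⁺`. So early exercise never beats holding to
maturity, which pays `P_ν(K₂)`.
-/

lemma putPrice_map_snd (π : Measure (ℝ × ℝ)) (K : ℝ) :
    putPrice (π.map Prod.snd) K = ∫ p, max (K - p.2) 0 ∂π :=
  integral_map measurable_snd.aemeasurable (by fun_prop)

lemma amPayoff_empty (K₁ K₂ : ℝ) (π : Measure (ℝ × ℝ)) :
    amPayoff K₁ K₂ π ∅ = putPrice (π.map Prod.snd) K₂ := by
  simp [amPayoff, putPrice_map_snd]

lemma setIntegral_max_sub_zero {α : Type*} [MeasurableSpace α] {μ : Measure α} {f : α → ℝ}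
    (hf : Measurable f) (s : Set α) (K : ℝ) :
    ∫ x in s, max (K - f x) 0 ∂μ = ∫ x in s ∩ f ⁻¹' Iio K, (K - f x) ∂μ := by
  have hpos : ∀ x, max (K - f x) 0 = (f ⁻¹' Iio K).indicator (fun x => K - f x) x := by
    intro x
    by_cases hx : f x < K
    · simp [hx, hx.le]
    · simp [hx, not_lt.mp hx]
  simp_rw [hpos]
  exact setIntegral_indicator (measurableSet_Iio.preimage hf)

lemma amPayoff_eq_add {π : Measure (ℝ × ℝ)} [IsFiniteMeasure π]
    (hX : Integrable (fun p : ℝ × ℝ => p.1) π) (hY : Integrable (fun p : ℝ × ℝ => p.2) π)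
    (K₁ K₂ : ℝ) {B : Set ℝ} (hB : MeasurableSet B) :
    amPayoff K₁ K₂ π B = ∫ p in Prod.fst ⁻¹' B, max (K₁ - p.1) 0 ∂π
      + ∫ p in (Prod.fst ⁻¹' B)ᶜ, max (K₂ - p.2) 0 ∂π := by
  have hS : MeasurableSet (Prod.fst ⁻¹' B : Set (ℝ × ℝ)) := hB.preimage measurable_fst
  have hsplit : ∀ p : ℝ × ℝ,
      B.indicator (fun x => max (K₁ - x) 0) p.1 + Bᶜ.indicator (fun _ => max (K₂ - p.2) 0) p.1
        = (Prod.fst ⁻¹' B).indicator (fun p => max (K₁ - p.1) 0) p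
          + (Prod.fst ⁻¹' B)ᶜ.indicator (fun p => max (K₂ - p.2) 0) p := by
    intro p
    by_cases hp : p.1 ∈ B <;> simp [hp]
  have hf₁ : Integrable (fun p : ℝ × ℝ => max (K₁ - p.1) 0) π :=
    ((integrable_const K₁).sub hX).pos_part
  have hf₂ : Integrable (fun p : ℝ × ℝ => max (K₂ - p.2) 0) π :=
    ((integrable_const K₂).sub hY).pos_part
  rw [amPayoff, integral_congr_ae (ae_of_all _ hsplit),
    integral_add (hf₁.indicator hS) (hf₂.indicator hS.compl),
    integral_indicator hS, integral_indicator hS.compl]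

namespace IsMartingaleCoupling

variable {μ ν : Measure ℝ} {π : Measure (ℝ × ℝ)}

lemma integrable_fst (hπ : IsMartingaleCoupling μ ν π) (hμ : Integrable (fun x => x) μ) :
    Integrable (fun p : ℝ × ℝ => p.1) π := by
  rw [← hπ.2.1] at hμ
  exact hμ.comp_measurable measurable_fst

lemma integrable_snd (hπ : IsMartingaleCoupling μ ν π) (hν : Integrable (fun y => y) ν) :
    Integrable (fun p : ℝ × ℝ => p.2) π := by
  rw [← hπ.2.2.1] at hν
  exact hν.comp_measurable measurable_snd

lemma setIntegral_fst_eq_snd (hπ : IsMartingaleCoupling μ ν π) {B : Set ℝ}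
    (hB : MeasurableSet B) :
    ∫ p in Prod.fst ⁻¹' B, p.1 ∂π = ∫ p in Prod.fst ⁻¹' B, p.2 ∂π := by
  rw [← prod_univ, hπ.2.2.2 B hB, ← hπ.2.1,
    setIntegral_map (f := fun x => x) hB aestronglyMeasurable_id measurable_fst.aemeasurable,
    prod_univ]

lemma setIntegral_put_fst_le_put_snd (hπ : IsMartingaleCoupling μ ν π)
    (hμ : Integrable (fun x => x) μ) (hν : Integrable (fun y => y) ν)
    {K₁ K₂ : ℝ} (hK : K₁ ≤ K₂) {B : Set ℝ} (hB : MeasurableSet B) :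
    ∫ p in Prod.fst ⁻¹' B, max (K₁ - p.1) 0 ∂π
      ≤ ∫ p in Prod.fst ⁻¹' B, max (K₂ - p.2) 0 ∂π := by
  have := hπ.1
  have hX := hπ.integrable_fst hμ
  have hY := hπ.integrable_snd hν
  set S : Set (ℝ × ℝ) := Prod.fst ⁻¹' (B ∩ Iio K₁)
  calc ∫ p in Prod.fst ⁻¹' B, max (K₁ - p.1) 0 ∂π
      = ∫ p in S, (K₁ - p.1) ∂π := setIntegral_max_sub_zero measurable_fst _ K₁
    _ ≤ ∫ p in S, (K₂ - p.1) ∂π :=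
        integral_mono ((integrable_const _).sub hX).restrict ((integrable_const _).sub hX).restrict
          fun p => sub_le_sub_right hK p.1
    _ = ∫ p in S, (K₂ - p.2) ∂π := by
        rw [integral_sub (integrable_const _).restrict hX.restrict,
          integral_sub (integrable_const _).restrict hY.restrict,
          hπ.setIntegral_fst_eq_snd (hB.inter measurableSet_Iio)]
    _ ≤ ∫ p in S, max (K₂ - p.2) 0 ∂π :=
        integral_mono ((integrable_const _).sub hY).restrict
          ((integrable_const _).sub hY).pos_part.restrict fun p => le_max_left _ _
    _ ≤ ∫ p in Prod.fst ⁻¹' B, max (K₂ - p.2) 0 ∂π :=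
        setIntegral_mono_set ((integrable_const _).sub hY).pos_part.integrableOn
          (ae_of_all _ fun p => le_max_right _ _)
          (preimage_mono inter_subset_left).eventuallyLE

lemma amPayoff_le_putPrice (hπ : IsMartingaleCoupling μ ν π)
    (hμ : Integrable (fun x => x) μ) (hν : Integrable (fun y => y) ν)
    {K₁ K₂ : ℝ} (hK : K₁ ≤ K₂) {B : Set ℝ} (hB : MeasurableSet B) :
    amPayoff K₁ K₂ π B ≤ putPrice ν K₂ := by
  have := hπ.1
  have hY := hπ.integrable_snd hν
  calc amPayoff K₁ K₂ π B
      = ∫ p in Prod.fst ⁻¹' B, max (K₁ - p.1) 0 ∂π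
        + ∫ p in (Prod.fst ⁻¹' B)ᶜ, max (K₂ - p.2) 0 ∂π :=
        amPayoff_eq_add (hπ.integrable_fst hμ) hY K₁ K₂ hB
    _ ≤ ∫ p in Prod.fst ⁻¹' B, max (K₂ - p.2) 0 ∂π
        + ∫ p in (Prod.fst ⁻¹' B)ᶜ, max (K₂ - p.2) 0 ∂π :=
        add_le_add_left (hπ.setIntegral_put_fst_le_put_snd hμ hν hK hB) _
    _ = ∫ p, max (K₂ - p.2) 0 ∂π :=
        integral_add_compl (hB.preimage measurable_fst) ((integrable_const _).sub hY).pos_part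
    _ = putPrice ν K₂ := by rw [← hπ.2.2.1, putPrice_map_snd]

end IsMartingaleCoupling

theorem degenerate_case_K1_le_K2_general
    (μ ν : Measure ℝ)
    (hμint : Integrable (fun x => x) μ) (hνint : Integrable (fun y => y) ν)
    (K₁ K₂ : ℝ) (hK : K₁ ≤ K₂)
    (π : Measure (ℝ × ℝ)) (hπ : IsMartingaleCoupling μ ν π) :
    (∀ B : Set ℝ, MeasurableSet B → amPayoff K₁ K₂ π B ≤ putPrice ν K₂) ∧
    amPayoff K₁ K₂ π ∅ = putPrice ν K₂ ∧
    sSup { r : ℝ | ∃ π' : Measure (ℝ × ℝ), ∃ B : Set ℝ,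
        IsMartingaleCoupling μ ν π' ∧ MeasurableSet B ∧ r = amPayoff K₁ K₂ π' B }
      = putPrice ν K₂ := by
  have hempty : amPayoff K₁ K₂ π ∅ = putPrice ν K₂ := by rw [amPayoff_empty, hπ.2.2.1]
  refine ⟨fun B hB => hπ.amPayoff_le_putPrice hμint hνint hK hB, hempty,
    IsGreatest.csSup_eq ⟨⟨π, ∅, hπ, .empty, hempty.symm⟩, ?_⟩⟩
  rintro _ ⟨π', B, hπ', hB, rfl⟩
  exact hπ'.amPayoff_le_putPrice hμint hνint hK hB

/-- Degenerate case `K₁ ≤ K₂`: the American put is equivalent to the European put with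
strike `K₂`; the payoff is at most `P_ν(K₂)` for every exercise set, it is attained by
never exercising early, and the supremum over all couplings and sets is `P_ν(K₂)`. -/
theorem degenerate_case_K1_le_K2
    (μ ν : Measure ℝ) [IsProbabilityMeasure μ] [IsProbabilityMeasure ν]
    (hμint : Integrable (fun x => x) μ) (hνint : Integrable (fun y => y) ν)
    (K₁ K₂ : ℝ) (hK : K₁ ≤ K₂)
    (π : Measure (ℝ × ℝ)) (hπ : IsMartingaleCoupling μ ν π) :
    (∀ B : Set ℝ, MeasurableSet B → amPayoff K₁ K₂ π B ≤ putPrice ν K₂) ∧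
    amPayoff K₁ K₂ π ∅ = putPrice ν K₂ ∧
    sSup { r : ℝ | ∃ π' : Measure (ℝ × ℝ), ∃ B : Set ℝ,
        IsMartingaleCoupling μ ν π' ∧ MeasurableSet B ∧ r = amPayoff K₁ K₂ π' B }
      = putPrice ν K₂ :=
  degenerate_case_K1_le_K2_general μ ν hμint hνint K₁ K₂ hK π hπ
end

section
/- Let ρ, η : ℝ → ℝ be continuous nonnegative functions with ∫ ρ(z) dz = ∫ η(z) dz = 1 and ∫ z ρ(z) dz = ∫ z η(z) dz, and let μ, ν be the measures with Lebesgue densities ρ, η respectively, satisfying P_μ(k) ≤ P_ν(k) for all k. Suppose there are reals ℓ_ν < ℓ_μ ≤ e₋ < e₊ ≤ r_μ < r_ν such that ρ > 0 exactly on (ℓ_μ, r_μ), η > 0 exactly on (ℓ_ν, r_ν), ρ > η on (e₋, e₊), ρ ≤ η off (e₋, e₊), and η > ρ on (ℓ_ν, e₋) ∪ (e₊, r_ν). Then for every x ∈ (e₋, r_μ) there exist reals f and g with f < e₋ < x < g such that ∫_f^x ρ(z) dz = ∫_f^g η(z) dz and ∫_f^x z ρ(z) dz = ∫_f^g z η(z)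 dz. -/
/-!
Fix `x ∈ (e₋, r_μ)`. For `f ≤ e₋` the mass gap `φ f = ∫_f^x ρ - ∫_f^x η` increases with `f`,
because `η ≥ ρ` left of `e₋`. When `0 ≤ φ f ≤ ∫_x^{r_ν} η`, inverting the distribution function
of `η` gives `g f ≥ x` with `∫_x^{g f} η = φ f`, i.e. `∫_f^x ρ = ∫_f^{g f} η`, and `g` is
continuous. It remains to find a zero of the moment gap `Ψ f = ∫_f^{g f} z η - ∫_f^x z ρ`.

Left endpoint, `Ψ ≤ 0`: if `φ ℓ_ν > 0`, take `f = ℓ_ν`, where `Ψ ≤ 0` is the put inequality at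
the strike `g ℓ_ν`; otherwise take the zero of `φ`, where `g f = x` and the single crossing of
`ρ` and `η` at `e₋` gives `Ψ < 0`. Right endpoint, `Ψ > 0`: take `f = e₋` (single crossing at
`min x e₊`), unless `φ` exceeds the `η`-mass of `(x, r_ν)` before `e₋`; then take the point
where `g f = r_ν` and compare with the equal total means.
-/

open MeasureTheory Set

theorem intervalIntegral_nonneg_of_forall_Ioo {f : ℝ → ℝ} {a b : ℝ} (hab : a ≤ b)
    (hf : ∀ z ∈ Ioo a b, 0 ≤ f z) : 0 ≤ ∫ z in a..b, f z := by
  rw [intervalIntegral.integral_of_le hab, integral_Ioc_eq_integral_Ioo]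
  exact setIntegral_nonneg measurableSet_Ioo hf

theorem intervalIntegral_pos_of_pos_of_nonneg {f : ℝ → ℝ} (hf : Continuous f) {a b c : ℝ}
    (hac : a < c) (hcb : c ≤ b) (hpos : ∀ z ∈ Ioo a c, 0 < f z)
    (hnn : ∀ z ∈ Ioo c b, 0 ≤ f z) : 0 < ∫ z in a..b, f z := by
  rw [← intervalIntegral.integral_add_adjacent_intervals (hf.intervalIntegrable a c)
    (hf.intervalIntegrable c b)]
  exact add_pos_of_pos_of_nonneg
    (intervalIntegral.intervalIntegral_pos_of_pos_on (hf.intervalIntegrable a c) hpos hac)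
    (intervalIntegral_nonneg_of_forall_Ioo hcb hnn)

theorem intervalIntegral_add_adjacent_of_continuous {f : ℝ → ℝ} (hf : Continuous f)
    (a b c : ℝ) : (∫ z in a..b, f z) + ∫ z in b..c, f z = ∫ z in a..c, f z :=
  intervalIntegral.integral_add_adjacent_intervals (hf.intervalIntegrable a b)
    (hf.intervalIntegrable b c)

theorem intervalIntegral_sub_of_continuous {f g : ℝ → ℝ} (hf : Continuous f)
    (hg : Continuous g) (a b : ℝ) :
    ∫ z in a..b, f z - g z = (∫ z in a..b, f z) - ∫ z in a..b, g z :=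
  intervalIntegral.integral_sub (hf.intervalIntegrable a b) (hg.intervalIntegrable a b)

theorem intervalIntegral_sub_const_mul {u : ℝ → ℝ} (hu : Continuous u) (a b c : ℝ) :
    ∫ z in a..b, (z - c) * u z = (∫ z in a..b, z * u z) - c * ∫ z in a..b, u z := by
  simp only [sub_mul]
  rw [intervalIntegral_sub_of_continuous (by fun_prop) (by fun_prop),
    intervalIntegral.integral_const_mul]

theorem intervalIntegral_const_sub_mul {u : ℝ → ℝ} (hu : Continuous u) (a b c : ℝ) :
    ∫ z in a..b, (c - z) * u z = c * (∫ z in a..b, u z) - ∫ z in a..b, z * u z := by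
  simp only [sub_mul]
  rw [intervalIntegral_sub_of_continuous (by fun_prop) (by fun_prop),
    intervalIntegral.integral_const_mul]

theorem continuous_intervalIntegral_of_continuous {w : ℝ → ℝ} (hw : Continuous w)
    {f g : ℝ → ℝ} (hf : Continuous f) (hg : Continuous g) :
    Continuous fun t => ∫ z in f t..g t, w z := by
  have h (t : ℝ) := intervalIntegral.integral_interval_sub_left
    (hw.intervalIntegrable (μ := volume) 0 (g t)) (hw.intervalIntegrable 0 (f t))
  simp only [← h]
  fun_prop

theorem integral_max_sub_mul_eq_intervalIntegral {f : ℝ → ℝ} {a k : ℝ}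
    (hf : Function.support f ⊆ Ioi a) (hak : a ≤ k) :
    ∫ z, max (k - z) 0 * f z = ∫ z in a..k, (k - z) * f z := by
  rw [← intervalIntegral.integral_eq_integral_of_support_subset]
  · refine intervalIntegral.integral_congr fun z hz => ?_
    rw [uIcc_of_le hak] at hz
    simp only [max_eq_left (sub_nonneg.2 hz.2)]
  · intro z hz
    rw [Function.mem_support, mul_ne_zero_iff] at hz
    exact ⟨hf hz.2, not_lt.1 fun hkz => hz.1 (max_eq_right (by linarith))⟩

theorem StrictMonoOn.exists_continuous_rightInverse_Icc {N : ℝ → ℝ} {a b : ℝ} (hab : a ≤ b)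
    (hc : ContinuousOn N (Icc a b)) (hm : StrictMonoOn N (Icc a b)) :
    ∃ G : ℝ → ℝ, Continuous G ∧ (∀ p ∈ Icc (N a) (N b), G p ∈ Icc a b ∧ N (G p) = p) ∧
      ∀ t ∈ Icc a b, G (N t) = t := by
  have hsurj (p : Icc (N a) (N b)) : ∃ t : Icc a b, N t = p := by
    obtain ⟨t, ht, hNt⟩ := intermediate_value_Icc hab hc p.2
    exact ⟨⟨t, ht⟩, hNt⟩
  choose T hT using hsurj
  have hNmem {t : ℝ} (ht : t ∈ Icc a b) : N t ∈ Icc (N a) (N b) :=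
    ⟨hm.monotoneOn (left_mem_Icc.2 hab) ht ht.1, hm.monotoneOn ht (right_mem_Icc.2 hab) ht.2⟩
  have hNab : N a ≤ N b := (hNmem (left_mem_Icc.2 hab)).2
  set H : ℝ → Icc a b := fun p => T (projIcc (N a) (N b) hNab p)
  have hH (p : ℝ) : N (H p) = projIcc (N a) (N b) hNab p := hT _
  have hHN (t : Icc a b) : H (N t) = t :=
    Subtype.ext <| hm.injOn (H (N t)).2 t.2 <| by rw [hH, projIcc_of_mem _ (hNmem t.2)]
  have hHmono : Monotone H := fun p q hpq => not_lt.1 fun hlt => by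
    have := hm (H q).2 (H p).2 hlt
    rw [hH, hH] at this
    exact not_le.2 this (monotone_projIcc _ hpq)
  refine ⟨fun p => H p, continuous_subtype_val.comp
    (hHmono.continuous_of_surjective fun t => ⟨N t, hHN t⟩),
    fun p hp => ⟨(H p).2, by rw [hH, projIcc_of_mem _ hp]⟩,
    fun t ht => congrArg Subtype.val (hHN ⟨t, ht⟩)⟩

section FirstMoment

variable {u v : ℝ → ℝ}

theorem intervalIntegral_id_mul_lt_of_crossing (hu : Continuous u) (hv : Continuous v)
    {a c x g : ℝ} (hac : a < c) (hcx : c ≤ x) (hxg : x ≤ g)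
    (hmass : ∫ z in a..x, u z = ∫ z in a..g, v z)
    (hlt : ∀ z ∈ Ioo a c, v z < u z) (hle : ∀ z ∈ Ioo c x, u z ≤ v z)
    (hv0 : ∀ z ∈ Ioo x g, 0 ≤ v z) :
    ∫ z in a..x, z * u z < ∫ z in a..g, z * v z := by
  -- by equality of masses the difference of the two sides is `hinner + houter`
  have hinner : 0 < ∫ z in a..x, (z - c) * v z - (z - c) * u z := by
    refine intervalIntegral_pos_of_pos_of_nonneg (by fun_prop) hac hcx (fun z hz => ?_)
      fun z hz => ?_
    · nlinarith [hlt z hz, hz.2]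
    · nlinarith [hle z hz, hz.1]
  have houter : 0 ≤ ∫ z in x..g, (z - c) * v z :=
    intervalIntegral_nonneg_of_forall_Ioo hxg fun z hz =>
      mul_nonneg (by linarith [hz.1]) (hv0 z hz)
  rw [intervalIntegral_sub_of_continuous (by fun_prop) (by fun_prop),
    intervalIntegral_sub_const_mul hv, intervalIntegral_sub_const_mul hu] at hinner
  rw [intervalIntegral_sub_const_mul hv] at houter
  have hzv := intervalIntegral_add_adjacent_of_continuous
    (by fun_prop : Continuous fun z => z * v z) a x g
  have hvv := intervalIntegral_add_adjacent_of_continuous hv a x g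
  linear_combination hinner + houter + hzv - c * hvv + c * hmass

theorem intervalIntegral_id_mul_le_of_put_le (hu : Continuous u) (hv : Continuous v)
    {a x g : ℝ} (hxg : x ≤ g) (hu0 : ∀ z ∈ Ioo x g, 0 ≤ u z)
    (hmass : ∫ z in a..x, u z = ∫ z in a..g, v z)
    (hput : ∫ z in a..g, (g - z) * u z ≤ ∫ z in a..g, (g - z) * v z) :
    ∫ z in a..g, z * v z ≤ ∫ z in a..x, z * u z := by
  have htail : 0 ≤ ∫ z in x..g, (g - z) * u z :=
    intervalIntegral_nonneg_of_forall_Ioo hxg fun z hz =>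
      mul_nonneg (by linarith [hz.2]) (hu0 z hz)
  rw [← intervalIntegral_add_adjacent_of_continuous (by fun_prop) a x g,
    intervalIntegral_const_sub_mul hu, intervalIntegral_const_sub_mul hv, hmass] at hput
  linarith

theorem intervalIntegral_id_mul_lt_of_tail (hu : Continuous u) (hv : Continuous v)
    {a r x c b : ℝ} (har : a ≤ r) (hrx : r < x) (hxc : x < c) (hcb : c ≤ b)
    (hle : ∀ z ∈ Ioo a r, u z ≤ v z) (hpos : ∀ z ∈ Ioo x c, 0 < u z)
    (hnn : ∀ z ∈ Ioo c b, 0 ≤ u z)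
    (hmass_total : ∫ z in a..b, u z = ∫ z in a..b, v z)
    (hmean_total : ∫ z in a..b, z * u z = ∫ z in a..b, z * v z)
    (hmass : ∫ z in r..x, u z = ∫ z in r..b, v z) :
    ∫ z in r..x, z * u z < ∫ z in r..b, z * v z := by
  -- Cancelling `[r, x]` against the totals, the mass `m` of `v - u` on `[a, r]` (first moment
  -- at most `r m`) is compared with the same mass `m` of `u` on `[x, b]` (more than `x m`).
  have hhead : 0 ≤ ∫ z in a..r, (r - z) * v z - (r - z) * u z :=
    intervalIntegral_nonneg_of_forall_Ioo har fun z hz => by nlinarith [hle z hz, hz.2]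
  have htail : 0 < ∫ z in x..b, (z - x) * u z :=
    intervalIntegral_pos_of_pos_of_nonneg (by fun_prop) hxc hcb
      (fun z hz => mul_pos (by linarith [hz.1]) (hpos z hz))
      fun z hz => mul_nonneg (by linarith [hz.1, hxc]) (hnn z hz)
  have htail_mass : 0 < ∫ z in x..b, u z :=
    intervalIntegral_pos_of_pos_of_nonneg hu hxc hcb hpos hnn
  rw [intervalIntegral_sub_of_continuous (by fun_prop) (by fun_prop),
    intervalIntegral_const_sub_mul hv, intervalIntegral_const_sub_mul hu] at hhead
  rw [intervalIntegral_sub_const_mul hu] at htail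
  have hmass_head : (∫ z in a..r, v z) - ∫ z in a..r, u z = ∫ z in x..b, u z := by
    linarith [intervalIntegral_add_adjacent_of_continuous hu a r x,
      intervalIntegral_add_adjacent_of_continuous hu a x b,
      intervalIntegral_add_adjacent_of_continuous hv a r b]
  have hzu := intervalIntegral_add_adjacent_of_continuous
    (by fun_prop : Continuous fun z => z * u z)
  have hzv := intervalIntegral_add_adjacent_of_continuous
    (by fun_prop : Continuous fun z => z * v z)
  linarith [hzu a r x, hzu a x b, hzv a r b, mul_pos (sub_pos.2 hrx) htail_mass,
    congrArg (r * ·) hmass_head]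

end FirstMoment

section Gaps

variable {ρ η : ℝ → ℝ}

variable (ρ η) in
noncomputable def massGap (x f : ℝ) : ℝ := (∫ z in f..x, ρ z) - ∫ z in f..x, η z

variable (ρ η) in
noncomputable def momentGap (x f g : ℝ) : ℝ :=
  (∫ z in f..g, z * η z) - ∫ z in f..x, z * ρ z

theorem continuous_massGap (hρ : Continuous ρ) (hη : Continuous η) (x : ℝ) :
    Continuous (massGap ρ η x) :=
  (continuous_intervalIntegral_of_continuous hρ continuous_id continuous_const).sub
    (continuous_intervalIntegral_of_continuous hη continuous_id continuous_const)

theorem continuous_momentGap (hρ : Continuous ρ) (hη : Continuous η) (x : ℝ) {G : ℝ → ℝ}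
    (hG : Continuous G) : Continuous fun f => momentGap ρ η x f (G f) :=
  (continuous_intervalIntegral_of_continuous (by fun_prop) continuous_id hG).sub
    (continuous_intervalIntegral_of_continuous (by fun_prop) continuous_id continuous_const)

theorem intervalIntegral_eq_of_massGap (hη : Continuous η) {x f g : ℝ}
    (hg : ∫ z in x..g, η z = massGap ρ η x f) : ∫ z in f..x, ρ z = ∫ z in f..g, η z := by
  unfold massGap at hg
  linarith [intervalIntegral_add_adjacent_of_continuous hη f x g]

end Gaps

structure DispersionAssumption (ρ η : ℝ → ℝ) (lν lμ em ep rμ rν : ℝ) : Prop where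
  continuous_ρ : Continuous ρ
  continuous_η : Continuous η
  ρ_nonneg : ∀ z, 0 ≤ ρ z
  η_nonneg : ∀ z, 0 ≤ η z
  integral_ρ : ∫ z, ρ z = 1
  integral_η : ∫ z, η z = 1
  integral_id_mul_eq : ∫ z, z * ρ z = ∫ z, z * η z
  lν_lt_lμ : lν < lμ
  lμ_le_em : lμ ≤ em
  em_lt_ep : em < ep
  rμ_lt_rν : rμ < rν
  put_le : ∀ k : ℝ, ∫ z, max (k - z) 0 * ρ z ≤ ∫ z, max (k - z) 0 * η z
  ρ_pos_iff : ∀ z, 0 < ρ z ↔ z ∈ Ioo lμ rμ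
  η_pos_iff : ∀ z, 0 < η z ↔ z ∈ Ioo lν rν
  η_lt_ρ : ∀ z ∈ Ioo em ep, η z < ρ z
  ρ_le_η : ∀ z ∉ Ioo em ep, ρ z ≤ η z
  ρ_lt_η : ∀ z ∈ Ioo lν em ∪ Ioo ep rν, ρ z < η z

namespace DispersionAssumption

variable {ρ η : ℝ → ℝ} {lν lμ em ep rμ rν x : ℝ} {G : ℝ → ℝ}

theorem lν_lt_em (D : DispersionAssumption ρ η lν lμ em ep rμ rν) : lν < em :=
  D.lν_lt_lμ.trans_le D.lμ_le_em

theorem support_ρ_subset (D : DispersionAssumption ρ η lν lμ em ep rμ rν) :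
    Function.support ρ ⊆ Ioc lν rν := fun z hz => by
  have hz := (D.ρ_pos_iff z).1 ((D.ρ_nonneg z).lt_of_ne' hz)
  exact ⟨D.lν_lt_lμ.trans hz.1, (hz.2.trans D.rμ_lt_rν).le⟩

theorem support_η_subset (D : DispersionAssumption ρ η lν lμ em ep rμ rν) :
    Function.support η ⊆ Ioc lν rν := fun z hz =>
  Ioo_subset_Ioc_self ((D.η_pos_iff z).1 ((D.η_nonneg z).lt_of_ne' hz))

theorem intervalIntegral_ρ_eq_η (D : DispersionAssumption ρ η lν lμ em ep rμ rν) :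
    ∫ z in lν..rν, ρ z = ∫ z in lν..rν, η z := by
  rw [intervalIntegral.integral_eq_integral_of_support_subset D.support_ρ_subset,
    intervalIntegral.integral_eq_integral_of_support_subset D.support_η_subset,
    D.integral_ρ, D.integral_η]

theorem intervalIntegral_id_mul_eq (D : DispersionAssumption ρ η lν lμ em ep rμ rν) :
    ∫ z in lν..rν, z * ρ z = ∫ z in lν..rν, z * η z := by
  rw [intervalIntegral.integral_eq_integral_of_support_subset
      ((Function.support_mul_subset_right _ _).trans D.support_ρ_subset),
    intervalIntegral.integral_eq_integral_of_support_subset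
      ((Function.support_mul_subset_right _ _).trans D.support_η_subset),
    D.integral_id_mul_eq]

theorem intervalIntegral_put_le (D : DispersionAssumption ρ η lν lμ em ep rμ rν) {k : ℝ}
    (hk : lν ≤ k) : ∫ z in lν..k, (k - z) * ρ z ≤ ∫ z in lν..k, (k - z) * η z := by
  rw [← integral_max_sub_mul_eq_intervalIntegral
      (D.support_ρ_subset.trans Ioc_subset_Ioi_self) hk,
    ← integral_max_sub_mul_eq_intervalIntegral
      (D.support_η_subset.trans Ioc_subset_Ioi_self) hk]
  exact D.put_le k

theorem massGap_strictMonoOn (D : DispersionAssumption ρ η lν lμ em ep rμ rν) (x : ℝ) :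
    StrictMonoOn (massGap ρ η x) (Icc lν em) := by
  intro a ha b hb hab
  have hpos : 0 < ∫ z in a..b, η z - ρ z :=
    intervalIntegral.intervalIntegral_pos_of_pos_on
      ((D.continuous_η.sub D.continuous_ρ).intervalIntegrable a b)
      (fun z hz => sub_pos.2 (D.ρ_lt_η z (Or.inl ⟨ha.1.trans_lt hz.1, hz.2.trans_le hb.2⟩)))
      hab
  rw [intervalIntegral_sub_of_continuous D.continuous_η D.continuous_ρ] at hpos
  unfold massGap
  linarith [intervalIntegral_add_adjacent_of_continuous D.continuous_ρ a b x,
    intervalIntegral_add_adjacent_of_continuous D.continuous_η a b x]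

theorem massGap_pos_of_ep_le (D : DispersionAssumption ρ η lν lμ em ep rμ rν) (hepx : ep ≤ x)
    (hxrν : x < rν) : 0 < massGap ρ η x lν := by
  have hpos : 0 < ∫ z in x..rν, η z - ρ z :=
    intervalIntegral.intervalIntegral_pos_of_pos_on
      ((D.continuous_η.sub D.continuous_ρ).intervalIntegrable x rν)
      (fun z hz => sub_pos.2 (D.ρ_lt_η z (Or.inr ⟨hepx.trans_lt hz.1, hz.2⟩))) hxrν
  rw [intervalIntegral_sub_of_continuous D.continuous_η D.continuous_ρ] at hpos
  unfold massGap
  linarith [intervalIntegral_add_adjacent_of_continuous D.continuous_ρ lν x rν,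
    intervalIntegral_add_adjacent_of_continuous D.continuous_η lν x rν,
    D.intervalIntegral_ρ_eq_η]

theorem massGap_em_pos (D : DispersionAssumption ρ η lν lμ em ep rμ rν)
    (hx : x ∈ Ioo em rμ) : 0 < massGap ρ η x em := by
  rcases le_or_gt x ep with hxep | hepx
  · have hpos : 0 < ∫ z in em..x, ρ z - η z :=
      intervalIntegral.intervalIntegral_pos_of_pos_on
        ((D.continuous_ρ.sub D.continuous_η).intervalIntegrable em x)
        (fun z hz => sub_pos.2 (D.η_lt_ρ z ⟨hz.1, hz.2.trans_le hxep⟩)) hx.1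
    rwa [intervalIntegral_sub_of_continuous D.continuous_ρ D.continuous_η] at hpos
  · exact (D.massGap_pos_of_ep_le hepx.le (hx.2.trans D.rμ_lt_rν)).trans
      (D.massGap_strictMonoOn x (left_mem_Icc.2 D.lν_lt_em.le) (right_mem_Icc.2 D.lν_lt_em.le)
        D.lν_lt_em)

theorem massGap_lν_lt (D : DispersionAssumption ρ η lν lμ em ep rμ rν)
    (hx : x ∈ Ioo em rμ) : massGap ρ η x lν < ∫ z in x..rν, η z := by
  have hpos : 0 < ∫ z in x..rν, ρ z :=
    intervalIntegral_pos_of_pos_of_nonneg D.continuous_ρ hx.2 D.rμ_lt_rν.le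
      (fun z hz => (D.ρ_pos_iff z).2 ⟨D.lμ_le_em.trans_lt (hx.1.trans hz.1), hz.2⟩)
      fun z _ => D.ρ_nonneg z
  unfold massGap
  linarith [intervalIntegral_add_adjacent_of_continuous D.continuous_ρ lν x rν,
    intervalIntegral_add_adjacent_of_continuous D.continuous_η lν x rν,
    D.intervalIntegral_ρ_eq_η]

theorem exists_quantile (D : DispersionAssumption ρ η lν lμ em ep rμ rν) (hlx : lν ≤ x)
    (hxr : x < rν) :
    ∃ G : ℝ → ℝ, Continuous G ∧
      (∀ p ∈ Icc 0 (∫ z in x..rν, η z), G p ∈ Icc x rν ∧ ∫ z in x..G p, η z = p) ∧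
      ∀ t ∈ Icc x rν, G (∫ z in x..t, η z) = t := by
  have hmono : StrictMonoOn (fun t => ∫ z in x..t, η z) (Icc x rν) := by
    intro a ha b hb hab
    have hpos : 0 < ∫ z in a..b, η z :=
      intervalIntegral.intervalIntegral_pos_of_pos_on (D.continuous_η.intervalIntegrable a b)
        (fun z hz => (D.η_pos_iff z).2
          ⟨hlx.trans_lt (ha.1.trans_lt hz.1), hz.2.trans_le hb.2⟩) hab
    linarith [intervalIntegral_add_adjacent_of_continuous D.continuous_η x a b]
  simpa only [id, intervalIntegral.integral_same] using
    hmono.exists_continuous_rightInverse_Icc hxr.le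
      (continuous_intervalIntegral_of_continuous D.continuous_η continuous_const
        continuous_id).continuousOn

theorem momentGap_lν_nonpos (D : DispersionAssumption ρ η lν lμ em ep rμ rν) {g : ℝ}
    (hlx : lν ≤ x) (hxg : x ≤ g) (hmass : ∫ z in lν..x, ρ z = ∫ z in lν..g, η z) :
    momentGap ρ η x lν g ≤ 0 :=
  sub_nonpos.2 <| intervalIntegral_id_mul_le_of_put_le D.continuous_ρ D.continuous_η hxg
    (fun z _ => D.ρ_nonneg z) hmass (D.intervalIntegral_put_le (hlx.trans hxg))

theorem momentGap_neg_of_massGap_eq_zero (D : DispersionAssumption ρ η lν lμ em ep rμ rν)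
    {l : ℝ} (hl : l ∈ Ico lν em) (hx : x ∈ Ioo em ep) (h0 : massGap ρ η x l = 0) :
    momentGap ρ η x l x < 0 :=
  sub_neg.2 <| intervalIntegral_id_mul_lt_of_crossing D.continuous_η D.continuous_ρ hl.2
    hx.1.le le_rfl (by unfold massGap at h0; linarith)
    (fun z hz => D.ρ_lt_η z (Or.inl ⟨hl.1.trans_lt hz.1, hz.2⟩))
    (fun z hz => (D.η_lt_ρ z ⟨hz.1, hz.2.trans hx.2⟩).le) (by simp)

theorem momentGap_em_pos (D : DispersionAssumption ρ η lν lμ em ep rμ rν) {g : ℝ}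
    (hx : em < x) (hxg : x ≤ g) (hmass : ∫ z in em..x, ρ z = ∫ z in em..g, η z) :
    0 < momentGap ρ η x em g :=
  sub_pos.2 <| intervalIntegral_id_mul_lt_of_crossing D.continuous_ρ D.continuous_η
    (lt_min hx D.em_lt_ep) (min_le_left _ _) hxg hmass
    (fun z hz => D.η_lt_ρ z ⟨hz.1, hz.2.trans_le (min_le_right _ _)⟩)
    (fun z hz => D.ρ_le_η z fun h => lt_asymm hz.1 (lt_min hz.2 h.2))
    fun z _ => D.η_nonneg z

theorem momentGap_rν_pos (D : DispersionAssumption ρ η lν lμ em ep rμ rν) {r : ℝ}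
    (hr : r ∈ Icc lν em) (hx : x ∈ Ioo em rμ)
    (hmass : ∫ z in r..x, ρ z = ∫ z in r..rν, η z) : 0 < momentGap ρ η x r rν :=
  sub_pos.2 <| intervalIntegral_id_mul_lt_of_tail D.continuous_ρ D.continuous_η hr.1
    (hr.2.trans_lt hx.1) hx.2 D.rμ_lt_rν.le
    (fun z hz => D.ρ_le_η z fun h => lt_asymm h.1 (hz.2.trans_le hr.2))
    (fun z hz => (D.ρ_pos_iff z).2 ⟨D.lμ_le_em.trans_lt (hx.1.trans hz.1), hz.2⟩)
    (fun z _ => D.ρ_nonneg z) D.intervalIntegral_ρ_eq_η D.intervalIntegral_id_mul_eq hmass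

theorem exists_left_endpoint (D : DispersionAssumption ρ η lν lμ em ep rμ rν)
    (hx : x ∈ Ioo em rμ)
    (hG : ∀ p ∈ Icc 0 (∫ z in x..rν, η z), G p ∈ Icc x rν ∧ ∫ z in x..G p, η z = p)
    (hGinv : ∀ t ∈ Icc x rν, G (∫ z in x..t, η z) = t) :
    ∃ l ∈ Ico lν em, 0 ≤ massGap ρ η x l ∧ massGap ρ η x l < ∫ z in x..rν, η z ∧
      momentGap ρ η x l (G (massGap ρ η x l)) ≤ 0 ∧
      (0 < massGap ρ η x l ∨ momentGap ρ η x l (G (massGap ρ η x l)) < 0) := by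
  have hxrν : x < rν := hx.2.trans D.rμ_lt_rν
  rcases lt_or_ge 0 (massGap ρ η x lν) with hpos | hnonpos
  · refine ⟨lν, ⟨le_rfl, D.lν_lt_em⟩, hpos.le, D.massGap_lν_lt hx, ?_, Or.inl hpos⟩
    obtain ⟨hGmem, hGmass⟩ := hG _ ⟨hpos.le, (D.massGap_lν_lt hx).le⟩
    exact D.momentGap_lν_nonpos (D.lν_lt_em.trans hx.1).le hGmem.1
      (intervalIntegral_eq_of_massGap D.continuous_η hGmass)
  · have hxep : x < ep := not_le.1 fun h => hnonpos.not_gt (D.massGap_pos_of_ep_le h hxrν)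
    obtain ⟨l, hl, hl0⟩ := intermediate_value_Icc D.lν_lt_em.le
      (continuous_massGap D.continuous_ρ D.continuous_η x).continuousOn
      ⟨hnonpos, (D.massGap_em_pos hx).le⟩
    have hlem : l < em := hl.2.lt_of_ne (by rintro rfl; exact (D.massGap_em_pos hx).ne' hl0)
    have hG0 : G 0 = x := by simpa using hGinv x ⟨le_rfl, hxrν.le⟩
    have hneg := D.momentGap_neg_of_massGap_eq_zero ⟨hl.1, hlem⟩ ⟨hx.1, hxep⟩ hl0
    refine ⟨l, ⟨hl.1, hlem⟩, hl0.ge, ?_, ?_, Or.inr ?_⟩ <;> rw [hl0]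
    · exact intervalIntegral.intervalIntegral_pos_of_pos_on
        (D.continuous_η.intervalIntegrable _ _)
        (fun z hz => (D.η_pos_iff z).2 ⟨(D.lν_lt_em.trans hx.1).trans hz.1, hz.2⟩) hxrν
    all_goals rw [hG0]
    exacts [hneg.le, hneg]

theorem exists_right_endpoint (D : DispersionAssumption ρ η lν lμ em ep rμ rν)
    (hx : x ∈ Ioo em rμ)
    (hG : ∀ p ∈ Icc 0 (∫ z in x..rν, η z), G p ∈ Icc x rν ∧ ∫ z in x..G p, η z = p)
    (hGinv : ∀ t ∈ Icc x rν, G (∫ z in x..t, η z) = t) {l : ℝ} (hl : l ∈ Icc lν em)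
    (hlκ : massGap ρ η x l < ∫ z in x..rν, η z) :
    ∃ r ∈ Icc l em, massGap ρ η x r ≤ ∫ z in x..rν, η z ∧
      0 < momentGap ρ η x r (G (massGap ρ η x r)) := by
  rcases le_or_gt (massGap ρ η x em) (∫ z in x..rν, η z) with hemκ | hκem
  · refine ⟨em, ⟨hl.2, le_rfl⟩, hemκ, ?_⟩
    obtain ⟨hGmem, hGmass⟩ := hG _ ⟨(D.massGap_em_pos hx).le, hemκ⟩
    exact D.momentGap_em_pos hx.1 hGmem.1
      (intervalIntegral_eq_of_massGap D.continuous_η hGmass)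
  · obtain ⟨r, hr, hrκ⟩ := intermediate_value_Icc hl.2
      (continuous_massGap D.continuous_ρ D.continuous_η x).continuousOn ⟨hlκ.le, hκem.le⟩
    have hrem : r < em := hr.2.lt_of_ne (by rintro rfl; exact hκem.ne' hrκ)
    refine ⟨r, ⟨hr.1, hrem.le⟩, hrκ.le, ?_⟩
    rw [hrκ, hGinv rν ⟨(hx.2.trans D.rμ_lt_rν).le, le_rfl⟩]
    exact D.momentGap_rν_pos ⟨hl.1.trans hr.1, hrem.le⟩ hx
      (intervalIntegral_eq_of_massGap D.continuous_η hrκ.symm)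

theorem exists_momentGap_eq_zero (D : DispersionAssumption ρ η lν lμ em ep rμ rν)
    (hx : x ∈ Ioo em rμ) (hGc : Continuous G)
    (hG : ∀ p ∈ Icc 0 (∫ z in x..rν, η z), G p ∈ Icc x rν ∧ ∫ z in x..G p, η z = p)
    (hGinv : ∀ t ∈ Icc x rν, G (∫ z in x..t, η z) = t) :
    ∃ f < em, 0 < massGap ρ η x f ∧ massGap ρ η x f ≤ ∫ z in x..rν, η z ∧
      momentGap ρ η x f (G (massGap ρ η x f)) = 0 := by
  obtain ⟨l, hl, hl0, hlκ, hΨl, hl_pos⟩ := D.exists_left_endpoint hx hG hGinv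
  obtain ⟨r, hr, hrκ, hΨr⟩ :=
    D.exists_right_endpoint hx hG hGinv (Ico_subset_Icc_self hl) hlκ
  obtain ⟨f, hf, hΨf⟩ := intermediate_value_Icc hr.1
    (continuous_momentGap D.continuous_ρ D.continuous_η x
      (hGc.comp (continuous_massGap D.continuous_ρ D.continuous_η x))).continuousOn
    ⟨hΨl, hΨr.le⟩
  have hfr : f < r := hf.2.lt_of_ne (by rintro rfl; exact hΨr.ne' hΨf)
  have hmono := D.massGap_strictMonoOn x
  have hlI : l ∈ Icc lν em := Ico_subset_Icc_self hl
  have hfI : f ∈ Icc lν em := ⟨hl.1.trans hf.1, hfr.le.trans hr.2⟩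
  have hrI : r ∈ Icc lν em := ⟨hl.1.trans hr.1, hr.2⟩
  refine ⟨f, hfr.trans_le hr.2, ?_, (hmono.monotoneOn hfI hrI hfr.le).trans hrκ, hΨf⟩
  rcases hl_pos with hpos | hneg
  · exact hpos.trans_le (hmono.monotoneOn hlI hfI hf.1)
  · exact hl0.trans_lt (hmono hlI hfI (hf.1.lt_of_ne (by rintro rfl; exact hneg.ne hΨf)))

end DispersionAssumption

theorem dispersion_existence_fg_general
    (ρ η : ℝ → ℝ) (hρc : Continuous ρ) (hηc : Continuous η)
    (hρ0 : ∀ z, 0 ≤ ρ z) (hη0 : ∀ z, 0 ≤ η z)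
    (hρ1 : ∫ z, ρ z = 1) (hη1 : ∫ z, η z = 1)
    (hmean : ∫ z, z * ρ z = ∫ z, z * η z)
    (lν lμ em ep rμ rν : ℝ)
    (h1 : lν < lμ) (h2 : lμ ≤ em) (h3 : em < ep) (h5 : rμ < rν)
    (hconv : ∀ k : ℝ, ∫ z, max (k - z) 0 * ρ z ≤ ∫ z, max (k - z) 0 * η z)
    (hρsupp : ∀ z, 0 < ρ z ↔ z ∈ Set.Ioo lμ rμ)
    (hηsupp : ∀ z, 0 < η z ↔ z ∈ Set.Ioo lν rν)
    (hρη : ∀ z ∈ Set.Ioo em ep, η z < ρ z)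
    (hρη' : ∀ z ∉ Set.Ioo em ep, ρ z ≤ η z)
    (hηρ : ∀ z ∈ Set.Ioo lν em ∪ Set.Ioo ep rν, ρ z < η z) :
    ∀ x ∈ Set.Ioo em rμ, ∃ f g : ℝ, f < em ∧ em < x ∧ x < g ∧
      (∫ z in f..x, ρ z) = (∫ z in f..g, η z) ∧
      (∫ z in f..x, z * ρ z) = (∫ z in f..g, z * η z) := by
  have D : DispersionAssumption ρ η lν lμ em ep rμ rν :=
    ⟨hρc, hηc, hρ0, hη0, hρ1, hη1, hmean, h1, h2, h3, h5, hconv, hρsupp, hηsupp, hρη, hρη',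
      hηρ⟩
  intro x hx
  obtain ⟨G, hGc, hG, hGinv⟩ := D.exists_quantile (D.lν_lt_em.trans hx.1).le (hx.2.trans h5)
  obtain ⟨f, hfem, hpos, hκ, hzero⟩ := D.exists_momentGap_eq_zero hx hGc hG hGinv
  obtain ⟨hGmem, hGmass⟩ := hG _ ⟨hpos.le, hκ⟩
  refine ⟨f, G (massGap ρ η x f), hfem, hx.1, hGmem.1.lt_of_ne ?_,
    intervalIntegral_eq_of_massGap hηc hGmass, ?_⟩
  · rintro hxG
    rw [← hxG, intervalIntegral.integral_same] at hGmass
    exact hpos.ne hGmass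
  · unfold momentGap at hzero
    linarith

/-- Under the Dispersion Assumption on the densities `ρ` and `η`, for every
`x ∈ (e₋, r_μ)` there exist `f < e₋ < x < g` solving the mass and mean equations. -/
theorem dispersion_existence_fg
    (ρ η : ℝ → ℝ) (hρc : Continuous ρ) (hηc : Continuous η)
    (hρ0 : ∀ z, 0 ≤ ρ z) (hη0 : ∀ z, 0 ≤ η z)
    (hρint : Integrable ρ) (hηint : Integrable η)
    (hρ1 : ∫ z, ρ z = 1) (hη1 : ∫ z, η z = 1)
    (hρzint : Integrable (fun z => z * ρ z)) (hηzint : Integrable (fun z => z * η z))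
    (hmean : ∫ z, z * ρ z = ∫ z, z * η z)
    (lν lμ em ep rμ rν : ℝ)
    (h1 : lν < lμ) (h2 : lμ ≤ em) (h3 : em < ep) (h4 : ep ≤ rμ) (h5 : rμ < rν)
    (hconv : ∀ k : ℝ, ∫ z, max (k - z) 0 * ρ z ≤ ∫ z, max (k - z) 0 * η z)
    (hρsupp : ∀ z, 0 < ρ z ↔ z ∈ Set.Ioo lμ rμ)
    (hηsupp : ∀ z, 0 < η z ↔ z ∈ Set.Ioo lν rν)
    (hρη : ∀ z ∈ Set.Ioo em ep, η z < ρ z)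
    (hρη' : ∀ z ∉ Set.Ioo em ep, ρ z ≤ η z)
    (hηρ : ∀ z ∈ Set.Ioo lν em ∪ Set.Ioo ep rν, ρ z < η z) :
    ∀ x ∈ Set.Ioo em rμ, ∃ f g : ℝ, f < em ∧ em < x ∧ x < g ∧
      (∫ z in f..x, ρ z) = (∫ z in f..g, η z) ∧
      (∫ z in f..x, z * ρ z) = (∫ z in f..g, z * η z) :=
  dispersion_existence_fg_general ρ η hρc hηc hρ0 hη0 hρ1 hη1 hmean lν lμ em ep rμ rν h1 h2 h3 h5
    hconv hρsupp hηsupp hρη hρη' hηρ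
end
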